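/- arXiv:2009.02015 — 10 statements merged into one kernel-verified Lean document; each statement's English description precedes it below -/
import Mathlib

section
/- Let T be a real n×n matrix with nonnegative entries (T ≥ 0 entrywise) and spectral radius ρ. Then for every ε > 0 there exists a vector w ∈ ℝⁿ with all entries strictly positive such that Tw ≤ (ρ + ε)w entrywise. -/
open Matrix

/-- The spectral radius of a complex square matrix: the supremum of the moduli
of its (complex) eigenvalues. -/
noncomputable def specRad {m : Type*} [Fintype m] [DecidableEq m]
    (M : Matrix m m ℂ) : ℝ :=
  sSup ((fun z : ℂ => ‖z‖) '' spectrum ℂ M)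

/-- The spectral radius of a real square matrix: the supremum of the moduli
of its complex eigenvalues. -/
noncomputable def specRadR {m : Type*} [Fintype m] [DecidableEq m]
    (M : Matrix m m ℝ) : ℝ :=
  specRad (M.map Complex.ofReal)

/-!
Put `s = ρ + ε`. As `ρ(T / s) < 1`, the Neumann series `N = ∑ₖ (T / s)ᵏ` converges. It is
entrywise nonnegative and satisfies `N = 1 + (T / s) N`, so `w = N 1` satisfies
`w = 1 + (T / s) w ≥ 1`, and `T w = s (w - 1) ≤ s w`.
-/

open scoped NNReal ENNReal

section BanachAlgebra

variable {A : Type*} [NormedRing A] [NormedAlgebra ℂ A] [CompleteSpace A]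

-- The resolvent `z ↦ (1 - z • a)⁻¹` is holomorphic on the ball of radius `(spectralRadius ℂ a)⁻¹`,
-- so its Taylor series `∑ zⁿ aⁿ` converges absolutely there.
theorem summable_norm_pow_mul_pow_of_lt_inv_spectralRadius {a : A} {r : ℝ≥0}
    (hr : (r : ℝ≥0∞) < (spectralRadius ℂ a)⁻¹) :
    Summable fun n => ‖a ^ n‖ * (r : ℝ) ^ n := by
  obtain ⟨r', hrr', hr'⟩ := ENNReal.lt_iff_exists_nnreal_btwn.1 hr
  have hr'_pos : 0 < r' := pos_of_gt (ENNReal.coe_lt_coe.1 hrr')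
  have hradius := ((spectrum.hasFPowerSeriesOnBall_inverse_one_sub_smul ℂ a).exchange_radius
    ((spectrum.differentiableOn_inverse_one_sub_smul hr').hasFPowerSeriesOnBall hr'_pos)).r_le
  simpa only [ContinuousMultilinearMap.norm_mkPiRing] using
    FormalMultilinearSeries.summable_norm_mul_pow _ (hrr'.trans_le hradius)

end BanachAlgebra

section SpectralRadius

variable {m : Type*} [Fintype m] [DecidableEq m]

theorem specRad_nonneg (M : Matrix m m ℂ) : 0 ≤ specRad M :=
  Real.sSup_nonneg fun _ ⟨z, _, hz⟩ => hz ▸ norm_nonneg z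

theorem spectralRadius_le_ofReal_specRad (M : Matrix m m ℂ) :
    spectralRadius ℂ M ≤ ENNReal.ofReal (specRad M) := by
  refine iSup₂_le fun z hz => ?_
  rw [← ENNReal.ofReal_coe_nnreal, coe_nnnorm]
  exact ENNReal.ofReal_le_ofReal <|
    le_csSup (M.finite_spectrum.image _).bddAbove ⟨z, hz, rfl⟩

-- Any submultiplicative norm would do; under the Frobenius norm the entrywise embedding
-- `ℝ → ℂ` is isometric on matrices (`frobenius_norm_map_eq`).
attribute [local instance] Matrix.frobeniusNormedRing Matrix.frobeniusNormedAlgebra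

theorem summable_pow_inv_smul_of_specRadR_lt (T : Matrix m m ℝ) {s : ℝ} (hs : specRadR T < s) :
    Summable fun k : ℕ => (s⁻¹ • T) ^ k := by
  have hs_pos : 0 < s := (specRad_nonneg _).trans_lt hs
  have : CompleteSpace (Matrix m m ℂ) := FiniteDimensional.complete ℂ _
  have hr : ENNReal.ofReal s⁻¹ < (spectralRadius ℂ (T.map Complex.ofReal))⁻¹ := by
    rw [ENNReal.ofReal_inv_of_pos hs_pos]
    exact ENNReal.inv_lt_inv.2 <| (spectralRadius_le_ofReal_specRad _).trans_lt <|
      (ENNReal.ofReal_lt_ofReal_iff hs_pos).2 hs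
  refine .of_norm ((summable_norm_pow_mul_pow_of_lt_inv_spectralRadius hr).congr fun k => ?_)
  have hmap : T.map Complex.ofReal ^ k = (T ^ k).map Complex.ofReal :=
    (map_pow Complex.ofRealHom.mapMatrix T k).symm
  rw [hmap, frobenius_norm_map_eq _ _ Complex.norm_real, smul_pow, norm_smul, norm_pow s⁻¹,
    Real.norm_of_nonneg (inv_nonneg.2 hs_pos.le), Real.coe_toNNReal _ (inv_nonneg.2 hs_pos.le),
    mul_comm]

end SpectralRadius

section NeumannSeries

variable {m R : Type*} [Fintype m] [Ring R] [PartialOrder R] [IsOrderedRing R]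

theorem Matrix.mulVec_apply_nonneg {B : Matrix m m R} (hB : ∀ i j, 0 ≤ B i j) {v : m → R}
    (hv : ∀ i, 0 ≤ v i) (i : m) : 0 ≤ (B *ᵥ v) i :=
  Finset.sum_nonneg fun j _ => mul_nonneg (hB i j) (hv j)

variable [DecidableEq m] [TopologicalSpace R] [OrderClosedTopology R]

theorem Matrix.tsum_pow_apply_nonneg {B : Matrix m m R} (hB : ∀ i j, 0 ≤ B i j)
    (h : Summable (B ^ ·)) (i j : m) : 0 ≤ (∑' k : ℕ, B ^ k) i j :=
  (Pi.hasSum.1 (Pi.hasSum.1 h.hasSum i) j).nonneg fun k => pow_apply_nonneg hB k i j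

theorem Matrix.exists_one_le_and_mulVec_add_one_eq_of_summable_pow [IsTopologicalRing R]
    {B : Matrix m m R} (hB : ∀ i j, 0 ≤ B i j) (h : Summable (B ^ ·)) :
    ∃ w : m → R, (∀ i, 1 ≤ w i) ∧ B *ᵥ w + 1 = w := by
  set N := ∑' k : ℕ, B ^ k
  have hw : B *ᵥ (N *ᵥ 1) + 1 = N *ᵥ 1 := by
    have h_inv : (1 - B) *ᵥ (N *ᵥ 1) = 1 := by
      rw [mulVec_mulVec, h.one_sub_mul_tsum_pow, one_mulVec]
    rw [sub_mulVec, one_mulVec] at h_inv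
    exact (sub_eq_iff_eq_add'.1 h_inv).symm
  refine ⟨N *ᵥ 1, fun i => ?_, hw⟩
  have hw_nonneg : ∀ j, 0 ≤ (N *ᵥ 1) j :=
    mulVec_apply_nonneg (tsum_pow_apply_nonneg hB h) fun _ => zero_le_one
  rw [← hw, Pi.add_apply, Pi.one_apply]
  exact le_add_of_nonneg_left (mulVec_apply_nonneg hB hw_nonneg i)

end NeumannSeries

theorem nonneg_matrix_almost_subinvariant_vector
    {n : ℕ} (T : Matrix (Fin n) (Fin n) ℝ)
    (hT : ∀ i j, 0 ≤ T i j) :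
    ∀ ε : ℝ, 0 < ε → ∃ w : Fin n → ℝ, (∀ i, 0 < w i) ∧
      ∀ i, T.mulVec w i ≤ (specRadR T + ε) * w i := by
  intro ε hε
  set s := specRadR T + ε
  have hs : 0 < s := add_pos_of_nonneg_of_pos (specRad_nonneg _) hε
  obtain ⟨w, hw_one_le, hw⟩ := exists_one_le_and_mulVec_add_one_eq_of_summable_pow (B := s⁻¹ • T)
    (fun i j => mul_nonneg (inv_nonneg.2 hs.le) (hT i j))
    (summable_pow_inv_smul_of_specRadR_lt T (lt_add_of_pos_right _ hε))
  refine ⟨w, fun i => one_pos.trans_le (hw_one_le i), fun i => ?_⟩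
  calc (T *ᵥ w) i = s * ((s⁻¹ • T) *ᵥ w) i := by
        rw [smul_mulVec, Pi.smul_apply, smul_eq_mul, mul_inv_cancel_left₀ hs.ne']
    _ = s * (w i - 1) := by rw [eq_sub_of_add_eq hw, Pi.sub_apply, Pi.one_apply]
    _ ≤ s * w i := mul_le_mul_of_nonneg_left (sub_le_self _ zero_le_one) hs.le
end

section
/- Let n ≥ 1, let w ∈ ℝⁿ have strictly positive entries, let γ ∈ [0,1), let x* ∈ ℂⁿ, and let (T_k)_{k∈ℕ} be a family of maps T_k : ℂⁿ → ℂⁿ such that T_k(x*) = x* and ‖T_k(x) - x*‖_w ≤ γ‖x - x*‖_w for all k and all x ∈ ℂⁿ, where ‖y‖_w = max_{1≤i≤n} |y_i|/w_i. Let (J_k)_{k≥1} be subsets of {1,…,n} such that every index i ∈ {1,…,n} belongs to J_k for infinitely many k, and let s_j(k) be integers with 0 ≤ s_j(k) ≤ k-1 and lim_{k→∞} s_j(k) = ∞ for each j. Define the asynchronous iterates from any x⁰ ∈ ℂⁿ by: x_i^k = x_i^{k-1} if i ∉ J_k, and x_i^k = (T_k(x_1^{s_1(k)}, …, x_n^{s_n(k)}))_i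 if i ∈ J_k. Then x^k converges to x* as k → ∞. -/
/-!
Track the scaled componentwise errors `‖x k i - x* i‖ / w i`. Since delays are bounded by the
current time and `γ ≤ 1`, they never exceed their initial maximum `B`. If from some time on all
errors are at most `C`, then once every delay has passed that time each update brings its
component below `γ C`, and because each component is updated again later, eventually all errors
are below `γ C`. Iterating gives the bounds `γ ^ m B` for all `m`.
-/

open Filter Topology

/-- The weighted maximum norm ‖y‖_w = max_i ‖y_i‖ / w_i on ℂⁿ. -/
noncomputable def wnormC {n : ℕ} (w : Fin n → ℝ) (y : Fin n → ℂ) : ℝ :=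
  ⨆ i, ‖y i‖ / w i

theorem le_wnormC {n : ℕ} (w : Fin n → ℝ) (y : Fin n → ℂ) (i : Fin n) :
    ‖y i‖ / w i ≤ wnormC w y :=
  le_ciSup (f := fun i => ‖y i‖ / w i) (Finite.bddAbove_range _) i

theorem wnormC_le {n : ℕ} {w : Fin n → ℝ} {y : Fin n → ℂ} {B : ℝ} (hB : 0 ≤ B)
    (h : ∀ i, ‖y i‖ / w i ≤ B) : wnormC w y ≤ B :=
  Real.iSup_le h hB

structure IsAsyncContractive {ι : Type*} (γ : ℝ) (J : ℕ → Set ι) (s : ι → ℕ → ℕ)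
    (err : ℕ → ι → ℝ) : Prop where
  update : ∀ k, 1 ≤ k → ∀ i ∈ J k, ∀ B, 0 ≤ B → (∀ j, err (s j k) j ≤ B) → err k i ≤ γ * B
  keep : ∀ k, 1 ≤ k → ∀ i ∉ J k, err k i = err (k - 1) i

namespace IsAsyncContractive

variable {ι : Type*} {γ : ℝ} {J : ℕ → Set ι} {s : ι → ℕ → ℕ} {err : ℕ → ι → ℝ}

theorem le_of_initial_le (h : IsAsyncContractive γ J s err) (hγ1 : γ ≤ 1)
    (hs : ∀ j k, 1 ≤ k → s j k ≤ k - 1) {B : ℝ} (hB : 0 ≤ B) (h0 : ∀ i, err 0 i ≤ B) :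
    ∀ k i, err k i ≤ B := by
  intro k
  induction k using Nat.strong_induction_on with
  | _ k ih =>
    rcases Nat.eq_zero_or_pos k with rfl | hk
    · exact h0
    intro i
    by_cases hi : i ∈ J k
    · calc err k i ≤ γ * B :=
            h.update k hk i hi B hB fun j => ih _ (by have := hs j k hk; omega) j
        _ ≤ B := mul_le_of_le_one_left hB hγ1
    · rw [h.keep k hk i hi]
      exact ih _ (by omega) i

theorem eventually_le_of_update_le (h : IsAsyncContractive γ J s err) {i : ι} {K : ℕ} {C : ℝ}
    (hC : ∀ k, K ≤ k → i ∈ J k → err k i ≤ C) (hJ : ∃ k, K ≤ k ∧ 1 ≤ k ∧ i ∈ J k) :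
    ∀ᶠ k in atTop, err k i ≤ C := by
  obtain ⟨k₀, hK, hk₀, hi⟩ := hJ
  refine eventually_atTop.2 ⟨k₀, fun k hk => ?_⟩
  induction k, hk using Nat.le_induction with
  | base => exact hC k₀ hK hi
  | succ k hk ih =>
    by_cases hi' : i ∈ J (k + 1)
    · exact hC _ (by omega) hi'
    · rw [h.keep (k + 1) (by omega) i hi', Nat.add_sub_cancel]
      exact ih

theorem eventually_le_mul [Finite ι] (h : IsAsyncContractive γ J s err)
    (hJ : ∀ i K, ∃ k, K ≤ k ∧ 1 ≤ k ∧ i ∈ J k) (hstend : ∀ j, Tendsto (s j) atTop atTop)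
    {B : ℝ} (hB : 0 ≤ B) (hle : ∀ᶠ k in atTop, ∀ i, err k i ≤ B) :
    ∀ᶠ k in atTop, ∀ i, err k i ≤ γ * B := by
  obtain ⟨K, hK⟩ := eventually_atTop.1 hle
  obtain ⟨K', hK'⟩ := eventually_atTop.1
    (eventually_all.2 fun j => (hstend j).eventually_ge_atTop K)
  refine eventually_all.2 fun i => h.eventually_le_of_update_le (K := max K' 1) ?_ (hJ i _)
  intro k hk hi
  exact h.update k (le_of_max_le_right hk) i hi B hB
    fun j => hK _ (hK' k (le_of_max_le_left hk) j) j

theorem eventually_le_pow_mul [Finite ι] (h : IsAsyncContractive γ J s err)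
    (hJ : ∀ i K, ∃ k, K ≤ k ∧ 1 ≤ k ∧ i ∈ J k) (hstend : ∀ j, Tendsto (s j) atTop atTop)
    (hγ0 : 0 ≤ γ) {B : ℝ} (hB : 0 ≤ B) (hle : ∀ᶠ k in atTop, ∀ i, err k i ≤ B) (m : ℕ) :
    ∀ᶠ k in atTop, ∀ i, err k i ≤ γ ^ m * B := by
  induction m with
  | zero => simpa using hle
  | succ m ih =>
    rw [pow_succ', mul_assoc]
    exact h.eventually_le_mul hJ hstend (by positivity) ih

theorem tendsto_zero [Fintype ι] (h : IsAsyncContractive γ J s err) (hγ0 : 0 ≤ γ)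
    (hγ1 : γ < 1) (hs : ∀ j k, 1 ≤ k → s j k ≤ k - 1)
    (hJ : ∀ i K, ∃ k, K ≤ k ∧ 1 ≤ k ∧ i ∈ J k) (hstend : ∀ j, Tendsto (s j) atTop atTop)
    (hnonneg : ∀ k i, 0 ≤ err k i) (i : ι) :
    Tendsto (fun k => err k i) atTop (𝓝 0) := by
  set B := ∑ j, err 0 j
  have hB : 0 ≤ B := Finset.sum_nonneg fun j _ => hnonneg 0 j
  have hbdd := h.le_of_initial_le hγ1.le hs hB
    fun j => Finset.single_le_sum (fun j _ => hnonneg 0 j) (Finset.mem_univ j)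
  have hlevels := h.eventually_le_pow_mul hJ hstend hγ0 hB (.of_forall hbdd)
  refine tendsto_order.2 ⟨fun a ha => .of_forall fun k => ha.trans_le (hnonneg k i),
    fun ε hε => ?_⟩
  have hgeom : Tendsto (fun m => γ ^ m * B) atTop (𝓝 0) := by
    simpa using (tendsto_pow_atTop_nhds_zero_of_lt_one hγ0 hγ1).mul_const B
  obtain ⟨m, hm⟩ := (hgeom.eventually (gt_mem_nhds hε)).exists
  exact (hlevels m).mono fun k hk => (hk i).trans_lt hm

end IsAsyncContractive

theorem asynchronous_iteration_convergence_general
    {n : ℕ}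
    (w : Fin n → ℝ) (hw : ∀ i, 0 < w i)
    (γ : ℝ) (hγ0 : 0 ≤ γ) (hγ1 : γ < 1)
    (xstar : Fin n → ℂ)
    (T : ℕ → (Fin n → ℂ) → (Fin n → ℂ))
    (hcontr : ∀ k, ∀ x : Fin n → ℂ,
      wnormC w (T k x - xstar) ≤ γ * wnormC w (x - xstar))
    (J : ℕ → Set (Fin n))
    (hJ : ∀ i : Fin n, ∀ K : ℕ, ∃ k : ℕ, K ≤ k ∧ 1 ≤ k ∧ i ∈ J k)
    (s : Fin n → ℕ → ℕ)
    (hs : ∀ j : Fin n, ∀ k : ℕ, 1 ≤ k → s j k ≤ k - 1)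
    (hstend : ∀ j : Fin n, Tendsto (s j) atTop atTop)
    (x : ℕ → Fin n → ℂ)
    (hrec : ∀ k : ℕ, 1 ≤ k → ∀ i : Fin n,
      (i ∈ J k → x k i = T k (fun j => x (s j k) j) i) ∧
      (i ∉ J k → x k i = x (k - 1) i)) :
    Tendsto x atTop (nhds xstar) := by
  set err : ℕ → Fin n → ℝ := fun k i => ‖x k i - xstar i‖ / w i
  have hasync : IsAsyncContractive γ J s err :=
    { update := fun k hk i hi B hB hle => by
        simp only [err, (hrec k hk i).1 hi]
        calc ‖T k (fun j => x (s j k) j) i - xstar i‖ / w i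
            ≤ wnormC w (T k (fun j => x (s j k) j) - xstar) := le_wnormC w (T k _ - xstar) i
          _ ≤ γ * wnormC w ((fun j => x (s j k) j) - xstar) := hcontr k _
          _ ≤ γ * B := mul_le_mul_of_nonneg_left (wnormC_le hB hle) hγ0
      keep := fun k hk i hi => by simp only [err, (hrec k hk i).2 hi] }
  have herr := hasync.tendsto_zero hγ0 hγ1 hs hJ hstend
    (fun k i => div_nonneg (norm_nonneg _) (hw i).le)
  refine tendsto_pi_nhds.2 fun i => tendsto_iff_norm_sub_tendsto_zero.2 ?_
  simpa [err, div_mul_cancel₀, (hw i).ne'] using (herr i).mul_const (w i)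

theorem asynchronous_iteration_convergence
    {n : ℕ} (hn : 1 ≤ n)
    (w : Fin n → ℝ) (hw : ∀ i, 0 < w i)
    (γ : ℝ) (hγ0 : 0 ≤ γ) (hγ1 : γ < 1)
    (xstar : Fin n → ℂ)
    (T : ℕ → (Fin n → ℂ) → (Fin n → ℂ))
    (hfix : ∀ k, T k xstar = xstar)
    (hcontr : ∀ k, ∀ x : Fin n → ℂ,
      wnormC w (T k x - xstar) ≤ γ * wnormC w (x - xstar))
    (J : ℕ → Set (Fin n))
    (hJ : ∀ i : Fin n, ∀ K : ℕ, ∃ k : ℕ, K ≤ k ∧ 1 ≤ k ∧ i ∈ J k)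
    (s : Fin n → ℕ → ℕ)
    (hs : ∀ j : Fin n, ∀ k : ℕ, 1 ≤ k → s j k ≤ k - 1)
    (hstend : ∀ j : Fin n, Tendsto (s j) atTop atTop)
    (x : ℕ → Fin n → ℂ)
    (hrec : ∀ k : ℕ, 1 ≤ k → ∀ i : Fin n,
      (i ∈ J k → x k i = T k (fun j => x (s j k) j) i) ∧
      (i ∉ J k → x k i = x (k - 1) i)) :
    Tendsto x atTop (nhds xstar) :=
  asynchronous_iteration_convergence_general w hw γ hγ0 hγ1 xstar T hcontr J hJ s hs hstend x hrec
end

section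
/- Let A be a complex n×n matrix and let α, β be real numbers. If λ ∈ ℂ is an eigenvalue of the 2n×2n block matrix T_{α,β} = [[(1+β)(I - αA), -βI], [I, 0]], then there exists an eigenvalue μ of A such that λ² - (1+β)(1 - αμ)λ + β = 0. -/
open Matrix

/-!
An eigenvector `(x, y)` of `fromBlocks P Q 1 0` for `λ` has `x = λ y`, so `y ≠ 0` solves the
quadratic eigenproblem `(λ P + Q) y = λ² y`. For `P = (1+β)(I - αA)` and `Q = -βI` this reads
`(1+β)αλ • A y = ((1+β)λ - β - λ²) • y`: either `y` is an eigenvector of `A` with the eigenvalue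
solving the quadratic, or both coefficients vanish and any eigenvalue of `A` will do.
-/

namespace Matrix

variable {K ι : Type*} [Field K] [Fintype ι] [DecidableEq ι]

theorem mem_spectrum_iff_exists_mulVec_eq_smul {M : Matrix ι ι K} {l : K} :
    l ∈ spectrum K M ↔ ∃ v ≠ 0, M *ᵥ v = l • v := by
  simp only [← spectrum_toLin', ← Module.End.hasEigenvalue_iff_mem_spectrum,
    Module.End.hasEigenvalue_iff, Submodule.ne_bot_iff, Module.End.mem_eigenspace_iff,
    toLin'_apply]
  grind

theorem exists_mulVec_eq_sq_smul_of_mem_spectrum_fromBlocks {P Q : Matrix ι ι K} {l : K}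
    (hl : l ∈ spectrum K (fromBlocks P Q (1 : Matrix ι ι K) 0)) :
    ∃ y ≠ 0, (l • P + Q) *ᵥ y = l ^ 2 • y := by
  obtain ⟨v, hv, hPQ⟩ := mem_spectrum_iff_exists_mulVec_eq_smul.mp hl
  rw [fromBlocks_mulVec] at hPQ
  have htop : P *ᵥ (v ∘ Sum.inl) + Q *ᵥ (v ∘ Sum.inr) = l • (v ∘ Sum.inl) :=
    funext fun i ↦ congrFun hPQ (Sum.inl i)
  have hbot : v ∘ Sum.inl = l • (v ∘ Sum.inr) := by
    funext i
    simpa [eq_comm] using congrFun hPQ (Sum.inr i)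
  refine ⟨v ∘ Sum.inr, fun hy ↦ hv ?_, ?_⟩
  · ext (i | i)
    · simpa [hy] using congrFun hbot i
    · exact congrFun hy i
  · rw [add_mulVec, smul_mulVec, ← mulVec_smul, ← hbot, htop, hbot, smul_smul, sq]

theorem exists_mem_spectrum_mul_eq_of_smul_mulVec_eq [IsAlgClosed K] {A : Matrix ι ι K}
    {s t : K} {y : ι → K} (hy : y ≠ 0) (h : s • A *ᵥ y = t • y) :
    ∃ μ ∈ spectrum K A, s * μ = t := by
  by_cases hs : s = 0
  · have ht : t = 0 := by simpa [hs, hy, eq_comm] using h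
    have : Nonempty ι := let ⟨i, _⟩ := Function.ne_iff.mp hy; ⟨i⟩
    obtain ⟨μ, hμ⟩ := spectrum.nonempty_of_isAlgClosed_of_finiteDimensional K A
    exact ⟨μ, hμ, by simp [hs, ht]⟩
  · refine ⟨t / s, mem_spectrum_iff_exists_mulVec_eq_smul.mpr ⟨y, hy, ?_⟩, mul_div_cancel₀ t hs⟩
    rw [div_eq_inv_mul, mul_smul, ← h, smul_smul, inv_mul_cancel₀ hs, one_smul]

end Matrix

theorem second_order_richardson_eigenvalue_quadratic
    {n : ℕ} (A : Matrix (Fin n) (Fin n) ℂ) (α β : ℝ) (l : ℂ)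
    (hl : l ∈ spectrum ℂ
      (Matrix.fromBlocks
        (((1 + β : ℝ) : ℂ) • ((1 : Matrix (Fin n) (Fin n) ℂ) - (α : ℂ) • A))
        (-((β : ℝ) : ℂ) • (1 : Matrix (Fin n) (Fin n) ℂ))
        (1 : Matrix (Fin n) (Fin n) ℂ)
        (0 : Matrix (Fin n) (Fin n) ℂ))) :
    ∃ μ ∈ spectrum ℂ A,
      l ^ 2 - ((1 + β : ℝ) : ℂ) * (1 - (α : ℂ) * μ) * l + ((β : ℝ) : ℂ) = 0 := by
  set c : ℂ := ((1 + β : ℝ) : ℂ)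
  set a : ℂ := (α : ℂ)
  set b : ℂ := ((β : ℝ) : ℂ)
  obtain ⟨y, hy, hquad⟩ := exists_mulVec_eq_sq_smul_of_mem_spectrum_fromBlocks hl
  have hA : (l * c * a) • A *ᵥ y = (l * c - b - l ^ 2) • y := by
    simp only [add_mulVec, smul_mulVec, sub_mulVec, one_mulVec] at hquad
    linear_combination (norm := module) -hquad
  obtain ⟨μ, hμ, hsμ⟩ := exists_mem_spectrum_mul_eq_of_smul_mulVec_eq hy hA
  exact ⟨μ, hμ, by linear_combination hsμ⟩
end

section
/- Let A be a complex n×n matrix and let α, β be real numbers. If μ ∈ ℂ is an eigenvalue of A and λ ∈ ℂ satisfies λ² - (1+β)(1 - αμ)λ + β = 0, then λ is an eigenvalue of the 2n×2n block matrix T_{α,β} = [[(1+β)(I - αA), -βI], [I, 0]]. -/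
/-! If `A v = μ v`, then `T_{α,β}` acts on vectors of the form `(l v, v)` as the companion matrix
of `X ^ 2 - (1 + β)(1 - α μ) X + β` acts on `(l, 1)`; a root `l` of that quadratic therefore
makes `(l v, v)` an eigenvector of `T_{α,β}` with eigenvalue `l`. -/

open Matrix

theorem Matrix.mem_spectrum_iff_exists_mulVec_eq_smul_s10 {K n : Type*} [Field K] [Fintype n]
    [DecidableEq n] {M : Matrix n n K} {l : K} :
    l ∈ spectrum K M ↔ ∃ v ≠ 0, M *ᵥ v = l • v := by
  simp only [← Matrix.spectrum_toLin', ← Module.End.hasEigenvalue_iff_mem_spectrum,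
    Module.End.hasEigenvalue_iff, Submodule.ne_bot_iff, Module.End.mem_eigenspace_iff,
    Matrix.toLin'_apply]
  exact ⟨fun ⟨v, hMv, hv⟩ => ⟨v, hv, hMv⟩, fun ⟨v, hv, hMv⟩ => ⟨v, hMv, hv⟩⟩

theorem Matrix.fromBlocks_one_zero_mulVec_sumElim_of_sq_eq {R n : Type*} [CommSemiring R]
    [Fintype n] [DecidableEq n] {B C : Matrix n n R} {v : n → R} {b c l : R}
    (hB : B *ᵥ v = b • v) (hC : C *ᵥ v = c • v) (hl : l ^ 2 = b * l + c) :
    fromBlocks B C 1 0 *ᵥ Sum.elim (l • v) v = l • Sum.elim (l • v) v := by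
  have hfirst : B *ᵥ (l • v) + C *ᵥ v = l • l • v := by
    rw [mulVec_smul, hB, hC, smul_smul, smul_smul, ← add_smul, ← sq, hl, mul_comm l b]
  rw [fromBlocks_mulVec, Sum.elim_comp_inl, Sum.elim_comp_inr, hfirst, one_mulVec,
    zero_mulVec, add_zero]
  ext (i | i) <;> rfl

theorem second_order_richardson_quadratic_root_is_eigenvalue
    {n : ℕ} (A : Matrix (Fin n) (Fin n) ℂ) (α β : ℝ) (μ l : ℂ)
    (hμ : μ ∈ spectrum ℂ A)
    (hl : l ^ 2 - ((1 + β : ℝ) : ℂ) * (1 - (α : ℂ) * μ) * l + ((β : ℝ) : ℂ) = 0) :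
    l ∈ spectrum ℂ
      (Matrix.fromBlocks
        (((1 + β : ℝ) : ℂ) • ((1 : Matrix (Fin n) (Fin n) ℂ) - (α : ℂ) • A))
        (-((β : ℝ) : ℂ) • (1 : Matrix (Fin n) (Fin n) ℂ))
        (1 : Matrix (Fin n) (Fin n) ℂ)
        (0 : Matrix (Fin n) (Fin n) ℂ)) := by
  obtain ⟨v, hv, hAv⟩ := mem_spectrum_iff_exists_mulVec_eq_smul_s10.mp hμ
  have hB : (((1 + β : ℝ) : ℂ) • ((1 : Matrix (Fin n) (Fin n) ℂ) - (α : ℂ) • A)) *ᵥ v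
      = (((1 + β : ℝ) : ℂ) * (1 - (α : ℂ) * μ)) • v := by
    rw [smul_mulVec, sub_mulVec, one_mulVec, smul_mulVec, hAv]
    module
  have hC : (-((β : ℝ) : ℂ) • (1 : Matrix (Fin n) (Fin n) ℂ)) *ᵥ v = (-((β : ℝ) : ℂ)) • v := by
    rw [smul_mulVec, one_mulVec]
  have hvec : Sum.elim (l • v) v ≠ 0 := fun h => hv (funext fun i => congrFun h (Sum.inr i))
  exact mem_spectrum_iff_exists_mulVec_eq_smul_s10.mpr
    ⟨_, hvec, fromBlocks_one_zero_mulVec_sumElim_of_sq_eq hB hC (by linear_combination hl)⟩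
end

section
/- Let a and b be real numbers with 0 < a < b, set q = (√b - √a)/(√b + √a), α = 2/(a+b), and β = q². Then for every real μ ∈ [a, b] and every complex number λ satisfying λ² - (1+β)(1 - αμ)λ + β = 0, one has |λ| = q. -/
/-!
The iteration polynomial `λ² - cλ + β` has real coefficients, so when its discriminant
`c² - 4β` is nonpositive its roots are conjugate (or a double real root) and each has modulus
`√β`. Frankel's parameters make this happen for every `μ ∈ [a, b]`: writing `s = √a`, `t = √b`,
the choice `q = (t - s)/(t + s)` satisfies `(1 + q²)(b - a) = 2q(a + b)`, which is exactly the
bound `|(1 + q²)(1 - αμ)| ≤ 2q` at the endpoints `μ = a, b`.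
-/

open Complex

theorem Complex.normSq_eq_of_sq_sub_mul_add_eq_zero {c p : ℝ} (hdisc : c ^ 2 ≤ 4 * p) {z : ℂ}
    (hz : z ^ 2 - c * z + p = 0) : normSq z = p := by
  have hre : z.re ^ 2 - z.im ^ 2 - c * z.re + p = 0 := by
    simpa [sq] using congrArg re hz
  have him : z.im * (2 * z.re - c) = 0 := by
    have := congrArg im hz
    simp only [sq, sub_im, add_im, mul_im, ofReal_re, ofReal_im, zero_im] at this
    linear_combination this
  have hcenter : 2 * z.re - c = 0 := by
    rcases mul_eq_zero.mp him with hreal | hcenter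
    · -- a real root is the double root `c / 2`, since `(2x - c)² = c² - 4p ≤ 0`
      have hsq : (2 * z.re - c) ^ 2 = c ^ 2 - 4 * p := by
        rw [hreal] at hre; linear_combination 4 * hre
      exact pow_eq_zero_iff two_ne_zero |>.mp (le_antisymm (by linarith) (sq_nonneg _))
    · exact hcenter
  rw [normSq_apply]
  linear_combination -hre + z.re * hcenter

theorem one_add_sq_mul_sq_sub_sq {s t : ℝ} (hst : s + t ≠ 0) :
    (1 + ((t - s) / (t + s)) ^ 2) * (t ^ 2 - s ^ 2) =
      2 * ((t - s) / (t + s)) * (t ^ 2 + s ^ 2) := by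
  rw [add_comm t s]
  field_simp
  ring

theorem sq_one_add_sq_mul_one_sub_le {a b μ : ℝ} (ha : 0 ≤ a) (hab : a < b) (hμ : μ ∈ Set.Icc a b) :
    ((1 + ((√b - √a) / (√b + √a)) ^ 2) * (1 - 2 / (a + b) * μ)) ^ 2 ≤
      4 * ((√b - √a) / (√b + √a)) ^ 2 := by
  set q := (√b - √a) / (√b + √a)
  have hb : 0 < b := ha.trans_lt hab
  have hsum : 0 < a + b := by linarith
  have hkey : (1 + q ^ 2) * (b - a) = 2 * q * (a + b) := by
    have := one_add_sq_mul_sq_sub_sq (s := √a) (t := √b) (by positivity)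
    rwa [Real.sq_sqrt ha, Real.sq_sqrt hb.le, add_comm b] at this
  have hcenter : (1 - 2 / (a + b) * μ) * (a + b) = a + b - 2 * μ := by
    field_simp
  have hspread : (a + b - 2 * μ) ^ 2 ≤ (b - a) ^ 2 := by
    nlinarith [hμ.1, hμ.2]
  have hscaled : ((1 + q ^ 2) * (1 - 2 / (a + b) * μ)) ^ 2 * (a + b) ^ 2 ≤
      4 * q ^ 2 * (a + b) ^ 2 :=
    calc ((1 + q ^ 2) * (1 - 2 / (a + b) * μ)) ^ 2 * (a + b) ^ 2
        = (1 + q ^ 2) ^ 2 * (a + b - 2 * μ) ^ 2 := by rw [← hcenter]; ring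
      _ ≤ (1 + q ^ 2) ^ 2 * (b - a) ^ 2 := by gcongr
      _ = 4 * q ^ 2 * (a + b) ^ 2 := by rw [← mul_pow, hkey]; ring
  exact le_of_mul_le_mul_right hscaled (by positivity)

theorem frankel_optimal_parameters_root_modulus
    (a b q α β : ℝ) (ha : 0 < a) (hab : a < b)
    (hq : q = (Real.sqrt b - Real.sqrt a) / (Real.sqrt b + Real.sqrt a))
    (hα : α = 2 / (a + b)) (hβ : β = q ^ 2) :
    ∀ μ : ℝ, μ ∈ Set.Icc a b → ∀ l : ℂ,
      l ^ 2 - ((1 + β : ℝ) : ℂ) * (1 - (α : ℂ) * (μ : ℂ)) * l + ((β : ℝ) : ℂ) = 0 →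
      ‖l‖ = q := by
  intro μ hμ l hl
  have hq0 : 0 ≤ q := hq ▸ div_nonneg
    (sub_nonneg.mpr (Real.sqrt_le_sqrt hab.le)) (by positivity)
  have hdisc : ((1 + β) * (1 - α * μ)) ^ 2 ≤ 4 * β := by
    subst hq hα hβ
    exact sq_one_add_sq_mul_one_sub_le ha.le hab hμ
  have hnormSq : normSq l = β :=
    normSq_eq_of_sq_sub_mul_add_eq_zero hdisc (by push_cast at hl ⊢; exact hl)
  rw [← sq_eq_sq₀ (norm_nonneg l) hq0, Complex.sq_norm, hnormSq, hβ]
end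

section
/- Let a and b be real numbers with 0 < a < b, and let A be a complex n×n matrix (n ≥ 1) whose spectrum is nonempty and contained in the real interval [a, b]. Set q = (√b - √a)/(√b + √a), α = 2/(a+b), and β = q². Then the spectral radius of the 2n×2n block matrix T_{α,β} = [[(1+β)(I - αA), -βI], [I, 0]] equals q. -/
/-!
A nonzero `z` is an eigenvalue of `T` exactly when `z² - (1 + β)(1 - α μ) z + β = 0` for some
eigenvalue `μ` of `A` (take the Schur complement of the block `z • 1`), and `0` is not an
eigenvalue since `β ≠ 0`. For `μ ∈ [a, b]` the middle coefficient `c = (1 + β)(1 - α μ)` is real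
with `|c| ≤ (1 + β)(b - a)/(a + b) = 2q`, so the discriminant `c² - 4q²` is nonpositive and both
roots have modulus `√β = q`.
-/

open Matrix

namespace Matrix

variable {K m : Type*} [Field K] [Fintype m] [DecidableEq m]

theorem mem_spectrum_iff_det_smul_one_sub_eq_zero (M : Matrix m m K) (z : K) :
    z ∈ spectrum K M ↔ (z • 1 - M).det = 0 := by
  rw [spectrum.mem_iff, isUnit_iff_isUnit_det, isUnit_iff_ne_zero, not_not,
    Algebra.algebraMap_eq_smul_one]

theorem det_smul_one_sub_fromBlocks (B : Matrix m m K) (β : K) {z : K} (hz : z ≠ 0) :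
    (z • 1 - fromBlocks B (-β • (1 : Matrix m m K)) (1 : Matrix m m K) 0).det =
      (z ^ 2 • 1 - z • B + β • 1).det := by
  let : Invertible (z • 1 : Matrix m m K) := invertibleOfLeftInverse _ (z⁻¹ • 1) (by
    rw [smul_mul_smul, Matrix.one_mul, inv_mul_cancel₀ hz, one_smul])
  have hblocks : z • 1 - fromBlocks B (-β • (1 : Matrix m m K)) 1 0 =
      fromBlocks (z • 1 - B) (β • 1) (-1) (z • (1 : Matrix m m K)) := by
    rw [← fromBlocks_one, fromBlocks_smul, sub_eq_add_neg, fromBlocks_neg, fromBlocks_add]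
    simp [sub_eq_add_neg]
  have hschur : z • 1 - B - β • 1 * ⅟(z • 1 : Matrix m m K) * -1 =
      z⁻¹ • (z ^ 2 • 1 - z • B + β • 1) := by
    rw [show ⅟(z • 1 : Matrix m m K) = z⁻¹ • 1 from rfl, smul_mul_smul, Matrix.one_mul,
      Matrix.mul_neg, Matrix.mul_one]
    match_scalars
    · field_simp
      ring
    · field_simp
  rw [hblocks, det_fromBlocks₂₂, hschur, det_smul, det_smul, det_one, mul_one, ← mul_assoc,
    ← mul_pow, mul_inv_cancel₀ hz, one_pow, one_mul]

theorem zero_notMem_spectrum_fromBlocks (B : Matrix m m K) {β : K} (hβ : β ≠ 0) :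
    0 ∉ spectrum K (fromBlocks B (-β • (1 : Matrix m m K)) (1 : Matrix m m K) 0) := by
  rw [spectrum.zero_mem_iff, not_not, isUnit_iff_isUnit_det]
  refine isUnit_det_of_right_inverse (B := fromBlocks 0 (1 : Matrix m m K) (-β⁻¹ • 1) (β⁻¹ • B)) ?_
  rw [fromBlocks_multiply]
  simp [hβ]

theorem mem_spectrum_fromBlocks_iff (A : Matrix m m K) {c α β : K} (hc : c ≠ 0)
    (hα : α ≠ 0) (hβ : β ≠ 0) (z : K) :
    z ∈ spectrum K (fromBlocks (c • (1 - α • A)) (-β • (1 : Matrix m m K)) (1 : Matrix m m K) 0) ↔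
      ∃ μ ∈ spectrum K A, z ^ 2 - c * (1 - α * μ) * z + β = 0 := by
  rcases eq_or_ne z 0 with rfl | hz
  · exact iff_of_false (zero_notMem_spectrum_fromBlocks _ hβ) (by simp [hβ])
  have hcαz : c * α * z ≠ 0 := by simp [hc, hα, hz]
  obtain ⟨μ, hμ⟩ : ∃ μ, c * α * z * μ = c * z - z ^ 2 - β := ⟨_, mul_div_cancel₀ _ hcαz⟩
  have hpencil : z ^ 2 • 1 - z • c • (1 - α • A) + β • 1 = (-(c * α * z)) • (μ • 1 - A) := by
    match_scalars
    · linear_combination hμ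
    · ring
  rw [mem_spectrum_iff_det_smul_one_sub_eq_zero, det_smul_one_sub_fromBlocks _ _ hz, hpencil,
    det_smul, mul_eq_zero, or_iff_right (pow_ne_zero _ (neg_ne_zero.2 hcαz)),
    ← mem_spectrum_iff_det_smul_one_sub_eq_zero]
  constructor
  · exact fun hμA => ⟨μ, hμA, by linear_combination hμ⟩
  · rintro ⟨ν, hν, hquad⟩
    convert hν
    exact mul_left_cancel₀ hcαz (by linear_combination hμ - hquad)

end Matrix

theorem Complex.norm_eq_of_sq_sub_mul_add_sq_eq_zero {z : ℂ} {c q : ℝ} (hq : 0 ≤ q)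
    (hc : |c| ≤ 2 * q) (h : z ^ 2 - c * z + q ^ 2 = 0) : ‖z‖ = q := by
  -- The imaginary part of the equation forces `z` to be real or `2 Re z = c`.
  have hre : z.re ^ 2 - z.im ^ 2 - c * z.re + q ^ 2 = 0 := by
    simpa [sq] using congrArg re h
  have him : z.im * (2 * z.re - c) = 0 := by
    have := congrArg im h
    simp [sq] at this
    linear_combination this
  have hc2 : c ^ 2 ≤ (2 * q) ^ 2 := sq_le_sq' (abs_le.1 hc).1 (abs_le.1 hc).2
  have hnormSq : z.re ^ 2 + z.im ^ 2 = q ^ 2 := by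
    rcases mul_eq_zero.1 him with him | him
    · rw [him] at hre ⊢
      nlinarith [sq_nonneg (2 * z.re - c)]
    · linear_combination -hre + z.re * him
  rw [← sq_eq_sq₀ (norm_nonneg z) hq, Complex.sq_norm, normSq_apply, ← hnormSq]
  ring

theorem abs_one_add_sq_mul_one_sub_le {a b r : ℝ} (ha : 0 ≤ a) (hab : a < b)
    (hr : r ∈ Set.Icc a b) :
    |(1 + ((√b - √a) / (√b + √a)) ^ 2) * (1 - 2 / (a + b) * r)| ≤
      2 * ((√b - √a) / (√b + √a)) := by
  have hsum : 0 < a + b := by linarith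
  have hfactor : (1 + ((√b - √a) / (√b + √a)) ^ 2) * ((b - a) / (a + b)) =
      2 * ((√b - √a) / (√b + √a)) := by
    obtain ⟨s, hs, rfl⟩ : ∃ s, 0 ≤ s ∧ a = s ^ 2 := ⟨√a, Real.sqrt_nonneg a, (Real.sq_sqrt ha).symm⟩
    obtain ⟨t, ht, rfl⟩ : ∃ t, 0 ≤ t ∧ b = t ^ 2 :=
      ⟨√b, Real.sqrt_nonneg b, (Real.sq_sqrt (by linarith)).symm⟩
    have hst : 0 < t + s := by nlinarith
    rw [Real.sqrt_sq hs, Real.sqrt_sq ht]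
    field_simp
    ring
  have hdev : |1 - 2 / (a + b) * r| ≤ (b - a) / (a + b) := by
    rw [show 1 - 2 / (a + b) * r = (a + b - 2 * r) / (a + b) by field_simp, abs_div,
      abs_of_pos hsum]
    gcongr
    exact abs_le.2 ⟨by linarith [hr.2], by linarith [hr.1]⟩
  rw [← hfactor, abs_mul, abs_of_pos (by positivity)]
  gcongr

open Polynomial in
theorem IsAlgClosed.exists_sq_sub_mul_add_eq_zero {K : Type*} [Field K] [IsAlgClosed K] (b c : K) :
    ∃ z : K, z ^ 2 - b * z + c = 0 := by
  have hdeg : (X ^ 2 - C b * X + C c).degree = 2 := by compute_degree!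
  obtain ⟨z, hz⟩ := IsAlgClosed.exists_root (X ^ 2 - C b * X + C c) (by rw [hdeg]; decide)
  exact ⟨z, by simpa using hz⟩

theorem specRad_eq_of_forall_norm_eq {m : Type*} [Fintype m] [DecidableEq m]
    {M : Matrix m m ℂ} {r : ℝ} (hne : (spectrum ℂ M).Nonempty)
    (hnorm : ∀ z ∈ spectrum ℂ M, ‖z‖ = r) : specRad M = r := by
  rw [specRad, Set.image_congr hnorm, hne.image_const, csSup_singleton]

theorem second_order_richardson_optimal_spectral_radius_general
    {n : ℕ} (A : Matrix (Fin n) (Fin n) ℂ)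
    (a b q α β : ℝ) (ha : 0 < a) (hab : a < b)
    (hspec_ne : (spectrum ℂ A).Nonempty)
    (hspec : ∀ μ ∈ spectrum ℂ A, ∃ r : ℝ, μ = (r : ℂ) ∧ r ∈ Set.Icc a b)
    (hq : q = (Real.sqrt b - Real.sqrt a) / (Real.sqrt b + Real.sqrt a))
    (hα : α = 2 / (a + b)) (hβ : β = q ^ 2) :
    specRad
      (Matrix.fromBlocks
        (((1 + β : ℝ) : ℂ) • ((1 : Matrix (Fin n) (Fin n) ℂ) - (α : ℂ) • A))
        (-((β : ℝ) : ℂ) • (1 : Matrix (Fin n) (Fin n) ℂ))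
        (1 : Matrix (Fin n) (Fin n) ℂ)
        (0 : Matrix (Fin n) (Fin n) ℂ)) = q := by
  have hq0 : 0 < q := hq ▸ div_pos (sub_pos.2 (Real.sqrt_lt_sqrt ha.le hab)) (by positivity)
  have hβ0 : 0 < β := hβ ▸ pow_pos hq0 2
  have hα0 : 0 < α := hα ▸ div_pos two_pos (by linarith)
  have hcoeff : ∀ μ ∈ spectrum ℂ A,
      ∃ c : ℝ, |c| ≤ 2 * q ∧ ((1 + β : ℝ) : ℂ) * (1 - α * μ) = c := by
    intro μ hμ
    obtain ⟨r, rfl, hr⟩ := hspec μ hμ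
    refine ⟨(1 + β) * (1 - α * r), ?_, by push_cast; ring⟩
    rw [hβ, hα, hq]
    exact abs_one_add_sq_mul_one_sub_le ha.le hab hr
  have hmem := mem_spectrum_fromBlocks_iff A (c := ((1 + β : ℝ) : ℂ)) (α := α) (β := β)
    (Complex.ofReal_ne_zero.2 (by linarith : 0 < 1 + β).ne')
    (Complex.ofReal_ne_zero.2 hα0.ne') (Complex.ofReal_ne_zero.2 hβ0.ne')
  apply specRad_eq_of_forall_norm_eq
  · obtain ⟨μ, hμ⟩ := hspec_ne
    obtain ⟨z, hz⟩ := IsAlgClosed.exists_sq_sub_mul_add_eq_zero (((1 + β : ℝ) : ℂ) * (1 - α * μ)) β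
    exact ⟨z, (hmem z).2 ⟨μ, hμ, hz⟩⟩
  · intro z hz
    obtain ⟨μ, hμ, hquad⟩ := (hmem z).1 hz
    obtain ⟨c, hc, hcμ⟩ := hcoeff μ hμ
    refine Complex.norm_eq_of_sq_sub_mul_add_sq_eq_zero hq0.le hc ?_
    rw [← hcμ, ← hquad, hβ]
    push_cast
    ring

theorem second_order_richardson_optimal_spectral_radius
    {n : ℕ} (hn : 1 ≤ n) (A : Matrix (Fin n) (Fin n) ℂ)
    (a b q α β : ℝ) (ha : 0 < a) (hab : a < b)
    (hspec_ne : (spectrum ℂ A).Nonempty)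
    (hspec : ∀ μ ∈ spectrum ℂ A, ∃ r : ℝ, μ = (r : ℂ) ∧ r ∈ Set.Icc a b)
    (hq : q = (Real.sqrt b - Real.sqrt a) / (Real.sqrt b + Real.sqrt a))
    (hα : α = 2 / (a + b)) (hβ : β = q ^ 2) :
    specRad
      (Matrix.fromBlocks
        (((1 + β : ℝ) : ℂ) • ((1 : Matrix (Fin n) (Fin n) ℂ) - (α : ℂ) • A))
        (-((β : ℝ) : ℂ) • (1 : Matrix (Fin n) (Fin n) ℂ))
        (1 : Matrix (Fin n) (Fin n) ℂ)
        (0 : Matrix (Fin n) (Fin n) ℂ)) = q :=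
  second_order_richardson_optimal_spectral_radius_general A a b q α β ha hab hspec_ne hspec hq hα hβ
end

section
/- Let A be a real symmetric positive definite n×n matrix whose eigenvalues all lie in [a, b] with 0 < a < b, let c ∈ ℝⁿ, and let x* = A⁻¹c. Set q = (√b - √a)/(√b + √a), α = 2/(a+b), and β = q². Define the sequence (x^k) by: x⁰ ∈ ℝⁿ arbitrary, x¹ = x⁰ + α(c - Ax⁰), and x^{k+1} = x^k + β(x^k - x^{k-1}) + (1+β)α(c - Ax^k) for k ≥ 1. Then for every k ≥ 0, ‖x^k - x*‖₂ ≤ q^k (1 + k(1 - q²)/(1 + q²)) ‖x⁰ - x*‖₂. -/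
open Matrix

/-- The Euclidean norm on ℝⁿ. -/
noncomputable def enorm₂ {n : ℕ} (v : Fin n → ℝ) : ℝ :=
  Real.sqrt (∑ i, (v i) ^ 2)

/-!
In an orthonormal eigenbasis of `A` the error `x k - x*` splits into scalar sequences with
`t 1 = m t 0` and `t (k + 2) = (1 + q²) m t (k + 1) - q² t k`, where `m = 1 - α λ` for an
eigenvalue `λ ∈ [a, b]`, so that `|m| ≤ (b - a) / (a + b) = 2 q / (1 + q²)`. Writing
`(1 + q²) m = 2 q c` with `|c| ≤ 1`, the rescaled sequence `t k / q ^ k` satisfies the Chebyshev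
recurrence, hence equals `T_k(c) t 0 + U_{k-1}(c) (t 1 / q - c t 0)`. Since `|T_k| ≤ 1` and
`|U_{k-1}| ≤ k` on `[-1, 1]`, this gives `|t k| ≤ q ^ k (1 + k (1 - q²) / (1 + q²)) |t 0|`, and
orthonormality of the eigenbasis adds these bounds up.
-/

namespace Polynomial.Chebyshev

theorem abs_eval_U_real_le (n : ℕ) {x : ℝ} (hx : |x| ≤ 1) : |(U ℝ n).eval x| ≤ n + 1 := by
  induction n with
  | zero => simp
  | succ n ih =>
    have hT := abs_eval_T_real_le_one (n + 1) hx
    rw [Nat.cast_succ, Nat.cast_succ, U_eq_X_mul_U_add_T, eval_add, eval_mul, eval_X]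
    calc |x * (U ℝ n).eval x + (T ℝ (n + 1)).eval x|
        ≤ |x| * |(U ℝ n).eval x| + |(T ℝ (n + 1)).eval x| := by
          rw [← abs_mul]; exact abs_add_le _ _
      _ ≤ 1 * (n + 1) + 1 := by gcongr
      _ = n + 1 + 1 := by ring

theorem eq_eval_T_add_eval_U_of_recurrence {R : Type*} [CommRing R] {c : R} {s : ℕ → R}
    (hs : ∀ k, s (k + 2) = 2 * c * s (k + 1) - s k) (k : ℕ) :
    s k = (T R k).eval c * s 0 + (U R (k - 1)).eval c * (s 1 - c * s 0) := by
  induction k using Nat.twoStepInduction with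
  | zero => simp
  | one => simp
  | more k ih₀ ih₁ =>
    have hT : T R ((k + 2 : ℕ) : ℤ) = 2 * X * T R ((k + 1 : ℕ) : ℤ) - T R k := by
      push_cast; exact T_add_two R k
    have hU : U R ((k + 2 : ℕ) - 1 : ℤ) = 2 * X * U R ((k + 1 : ℕ) - 1 : ℤ) - U R (k - 1) := by
      convert U_add_two R (k - 1) using 2 <;> push_cast <;> ring_nf
    rw [hs, ih₀, ih₁, hT, hU]
    simp only [eval_sub, eval_mul, eval_X, eval_ofNat]
    ring

end Polynomial.Chebyshev

open Polynomial Chebyshev in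
theorem abs_le_of_chebyshev_recurrence {c : ℝ} (hc : |c| ≤ 1) {s : ℕ → ℝ}
    (hs : ∀ k, s (k + 2) = 2 * c * s (k + 1) - s k) (k : ℕ) :
    |s k| ≤ |s 0| + k * |s 1 - c * s 0| := by
  have hU : |(U ℝ (k - 1)).eval c| ≤ k := by
    rcases k with _ | k
    · simp
    · simpa using abs_eval_U_real_le k hc
  rw [eq_eval_T_add_eval_U_of_recurrence hs k]
  calc _ ≤ |(T ℝ k).eval c| * |s 0| + |(U ℝ (k - 1)).eval c| * |s 1 - c * s 0| := by
        rw [← abs_mul, ← abs_mul]; exact abs_add_le _ _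
    _ ≤ 1 * |s 0| + k * |s 1 - c * s 0| := by
        gcongr; exact abs_eval_T_real_le_one k hc
    _ = _ := by ring

theorem abs_le_of_damped_chebyshev_recurrence {q c : ℝ} (hq : 0 < q) (hc : |c| ≤ 1) {t : ℕ → ℝ}
    (ht : ∀ k, t (k + 2) = 2 * q * c * t (k + 1) - q ^ 2 * t k) (k : ℕ) :
    |t k| ≤ q ^ k * (|t 0| + k * |t 1 / q - c * t 0|) := by
  have hs : ∀ k, t (k + 2) / q ^ (k + 2) = 2 * c * (t (k + 1) / q ^ (k + 1)) - t k / q ^ k := by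
    intro k
    field_simp
    rw [ht]
    ring
  have := abs_le_of_chebyshev_recurrence (s := fun k ↦ t k / q ^ k) hc hs k
  rw [abs_div, abs_of_pos (pow_pos hq k), div_le_iff₀ (pow_pos hq k)] at this
  simpa only [pow_zero, div_one, pow_one, mul_comm] using this

theorem abs_le_of_richardson_recurrence {q m : ℝ} (hq₀ : 0 < q) (hq₁ : q ≤ 1)
    (hm : |m| ≤ 2 * q / (1 + q ^ 2)) {t : ℕ → ℝ} (h₁ : t 1 = m * t 0)
    (ht : ∀ k, t (k + 2) = (1 + q ^ 2) * m * t (k + 1) - q ^ 2 * t k) (k : ℕ) :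
    |t k| ≤ q ^ k * (1 + k * (1 - q ^ 2) / (1 + q ^ 2)) * |t 0| := by
  set c := (1 + q ^ 2) * m / (2 * q) with hc
  have hc₁ : |c| ≤ 1 := by
    rw [hc, abs_div, abs_mul, abs_of_pos (by positivity : (0 : ℝ) < 1 + q ^ 2),
      abs_of_pos (by positivity : (0 : ℝ) < 2 * q), div_le_one (by positivity)]
    rwa [le_div_iff₀ (by positivity), mul_comm] at hm
  have hγ : 0 ≤ (1 - q ^ 2) / (1 + q ^ 2) := by
    apply div_nonneg <;> nlinarith
  have ht' : ∀ k, t (k + 2) = 2 * q * c * t (k + 1) - q ^ 2 * t k := by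
    intro k; rw [ht, hc]; field_simp
  have hfirst : t 1 / q - c * t 0 = c * ((1 - q ^ 2) / (1 + q ^ 2)) * t 0 := by
    rw [h₁, hc]; field_simp; ring
  calc |t k| ≤ q ^ k * (|t 0| + k * |t 1 / q - c * t 0|) :=
        abs_le_of_damped_chebyshev_recurrence hq₀ hc₁ ht' k
    _ ≤ q ^ k * (|t 0| + k * ((1 - q ^ 2) / (1 + q ^ 2) * |t 0|)) := by
        rw [hfirst, abs_mul, abs_mul, abs_of_nonneg hγ]
        gcongr
        nlinarith [abs_nonneg (t 0)]
    _ = q ^ k * (1 + k * (1 - q ^ 2) / (1 + q ^ 2)) * |t 0| := by ring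

theorem OrthonormalBasis.norm_le_of_abs_repr_le {ι E : Type*} [Fintype ι]
    [NormedAddCommGroup E] [InnerProductSpace ℝ E] (b : OrthonormalBasis ι ℝ E) {u v : E} {C : ℝ}
    (hC : 0 ≤ C) (h : ∀ i, |b.repr u i| ≤ C * |b.repr v i|) : ‖u‖ ≤ C * ‖v‖ := by
  rw [← b.repr.norm_map u, ← b.repr.norm_map v, EuclideanSpace.norm_eq, EuclideanSpace.norm_eq,
    ← Real.sqrt_sq hC, ← Real.sqrt_mul (sq_nonneg C), Finset.mul_sum]
  gcongr with i
  simpa only [Real.norm_eq_abs, mul_pow, sq_abs] using pow_le_pow_left₀ (abs_nonneg _) (h i) 2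

theorem LinearMap.IsSymmetric.norm_le_of_richardson_recurrence {E : Type*}
    [NormedAddCommGroup E] [InnerProductSpace ℝ E] [FiniteDimensional ℝ E]
    {T : E →ₗ[ℝ] E} (hT : T.IsSymmetric) {α q : ℝ} (hq₀ : 0 < q) (hq₁ : q ≤ 1)
    (hspec : ∀ μ, Module.End.HasEigenvalue T μ → |1 - α * μ| ≤ 2 * q / (1 + q ^ 2))
    {e : ℕ → E} (h₁ : e 1 = e 0 - α • T (e 0))
    (hrec : ∀ k, e (k + 2) = (1 + q ^ 2) • (e (k + 1) - α • T (e (k + 1))) - q ^ 2 • e k)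
    (k : ℕ) : ‖e k‖ ≤ q ^ k * (1 + k * (1 - q ^ 2) / (1 + q ^ 2)) * ‖e 0‖ := by
  let b := hT.eigenvectorBasis rfl
  have hq_sq : 0 ≤ 1 - q ^ 2 := by nlinarith
  refine b.norm_le_of_abs_repr_le (by positivity) fun i ↦ ?_
  refine abs_le_of_richardson_recurrence hq₀ hq₁ (hspec _ (hT.hasEigenvalue_eigenvalues rfl i))
    (t := fun k ↦ b.repr (e k) i) ?_ (fun k ↦ ?_) k
  all_goals
    simp only [b, h₁, hrec, map_sub, map_smul, PiLp.sub_apply, PiLp.smul_apply, smul_eq_mul,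
      hT.eigenvectorBasis_apply_self_apply, Real.ringHom_apply]
    ring

theorem two_mul_div_one_add_sq_eq_of_sqrt {a b q : ℝ} (ha : 0 ≤ a) (hb : 0 < b)
    (hq : q = (√b - √a) / (√b + √a)) : 2 * q / (1 + q ^ 2) = (b - a) / (a + b) := by
  have : 0 < √b + √a := by positivity
  conv_rhs => rw [← Real.sq_sqrt ha, ← Real.sq_sqrt hb.le]
  rw [hq]
  field_simp
  ring

theorem abs_one_sub_two_div_add_mul_le {a b μ : ℝ} (hab : 0 < a + b) (hμ : μ ∈ Set.Icc a b) :
    |1 - 2 / (a + b) * μ| ≤ (b - a) / (a + b) := by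
  have : 1 - 2 / (a + b) * μ = (a + b - 2 * μ) / (a + b) := by field_simp
  rw [this, abs_div, abs_of_pos hab]
  gcongr
  rw [abs_le]
  constructor <;> linarith [hμ.1, hμ.2]

theorem enorm₂_eq_norm_toLp {n : ℕ} (v : Fin n → ℝ) : enorm₂ v = ‖WithLp.toLp 2 v‖ := by
  simp [enorm₂, EuclideanSpace.norm_eq]

theorem Matrix.IsHermitian.enorm₂_le_of_richardson_recurrence {n : ℕ}
    {A : Matrix (Fin n) (Fin n) ℝ} (hA : A.IsHermitian) {α q : ℝ} (hq₀ : 0 < q) (hq₁ : q ≤ 1)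
    (hspec : ∀ μ ∈ spectrum ℝ A, |1 - α * μ| ≤ 2 * q / (1 + q ^ 2))
    {e : ℕ → Fin n → ℝ} (h₁ : e 1 = e 0 - α • (A *ᵥ e 0))
    (hrec : ∀ k, e (k + 2) = (1 + q ^ 2) • (e (k + 1) - α • (A *ᵥ e (k + 1))) - q ^ 2 • e k)
    (k : ℕ) : enorm₂ (e k) ≤ q ^ k * (1 + k * (1 - q ^ 2) / (1 + q ^ 2)) * enorm₂ (e 0) := by
  simp only [enorm₂_eq_norm_toLp]
  refine (isSymmetric_toEuclideanLin_iff.mpr hA).norm_le_of_richardson_recurrence hq₀ hq₁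
    (fun μ hμ ↦ hspec μ ?_) (e := fun k ↦ WithLp.toLp 2 (e k)) ?_ (fun k ↦ ?_) k
  · rw [← spectrum_toLpLin (p := 2)]
    exact hμ.mem_spectrum
  all_goals
    apply WithLp.ofLp_injective
    simp only [h₁, hrec, WithLp.ofLp_sub, WithLp.ofLp_smul, ofLp_toLpLin, toLin'_apply]

theorem second_order_richardson_error_bound_general
    {n : ℕ} (A : Matrix (Fin n) (Fin n) ℝ)
    (hsymm : A.IsSymm)
    (a b q α β : ℝ) (ha : 0 < a) (hab : a < b)
    (hspec : ∀ μ ∈ spectrum ℝ A, μ ∈ Set.Icc a b)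
    (hq : q = (Real.sqrt b - Real.sqrt a) / (Real.sqrt b + Real.sqrt a))
    (hα : α = 2 / (a + b)) (hβ : β = q ^ 2)
    (c : Fin n → ℝ) (xstar : Fin n → ℝ) (hxstar : xstar = A⁻¹.mulVec c)
    (x : ℕ → Fin n → ℝ)
    (hx1 : x 1 = x 0 + α • (c - A.mulVec (x 0)))
    (hrec : ∀ k : ℕ, 1 ≤ k →
      x (k + 1) = x k + β • (x k - x (k - 1)) + ((1 + β) * α) • (c - A.mulVec (x k))) :
    ∀ k : ℕ, enorm₂ (x k - xstar)
      ≤ q ^ k * (1 + (k : ℝ) * (1 - q ^ 2) / (1 + q ^ 2)) * enorm₂ (x 0 - xstar) := by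
  have hq₀ : 0 < q := by
    rw [hq]; exact div_pos (sub_pos.2 (Real.sqrt_lt_sqrt ha.le hab)) (by positivity)
  have hq₁ : q ≤ 1 := by
    rw [hq]; exact div_le_one_of_le₀ (by linarith [Real.sqrt_nonneg a]) (by positivity)
  have hunit : IsUnit A := spectrum.isUnit_of_zero_notMem ℝ fun h ↦ ha.not_ge (hspec 0 h).1
  have hsol : A *ᵥ xstar = c := by
    rw [hxstar, mulVec_mulVec, mul_nonsing_inv A ((isUnit_iff_isUnit_det A).mp hunit), one_mulVec]
  intro k
  refine (isHermitian_iff_isSymm.mpr hsymm).enorm₂_le_of_richardson_recurrence (α := α) hq₀ hq₁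
    (fun μ hμ ↦ ?_) (e := fun k ↦ x k - xstar) ?_ (fun k ↦ ?_) k
  · rw [hα, two_mul_div_one_add_sq_eq_of_sqrt ha.le (ha.trans hab) hq]
    exact abs_one_sub_two_div_add_mul_le (by linarith) (hspec μ hμ)
  · rw [hx1, ← hsol, mulVec_sub]; module
  · rw [hrec (k + 1) k.succ_pos, ← hsol, hβ, mulVec_sub, Nat.add_sub_cancel]; module

theorem second_order_richardson_error_bound
    {n : ℕ} (A : Matrix (Fin n) (Fin n) ℝ)
    (hsymm : A.IsSymm) (hpd : A.PosDef)
    (a b q α β : ℝ) (ha : 0 < a) (hab : a < b)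
    (hspec : ∀ μ ∈ spectrum ℝ A, μ ∈ Set.Icc a b)
    (hq : q = (Real.sqrt b - Real.sqrt a) / (Real.sqrt b + Real.sqrt a))
    (hα : α = 2 / (a + b)) (hβ : β = q ^ 2)
    (c : Fin n → ℝ) (xstar : Fin n → ℝ) (hxstar : xstar = A⁻¹.mulVec c)
    (x : ℕ → Fin n → ℝ)
    (hx1 : x 1 = x 0 + α • (c - A.mulVec (x 0)))
    (hrec : ∀ k : ℕ, 1 ≤ k →
      x (k + 1) = x k + β • (x k - x (k - 1)) + ((1 + β) * α) • (c - A.mulVec (x k))) :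
    ∀ k : ℕ, enorm₂ (x k - xstar)
      ≤ q ^ k * (1 + (k : ℝ) * (1 - q ^ 2) / (1 + q ^ 2)) * enorm₂ (x 0 - xstar) :=
  second_order_richardson_error_bound_general A hsymm a b q α β ha hab hspec hq hα hβ c xstar hxstar
    x hx1 hrec
end

section
/- Let T be a real n×n matrix with nonnegative entries (T ≥ 0 entrywise) and spectral radius ρ = ρ(T) < 1, suppose the spectrum of A = I - T consists of positive real numbers, and let α, β be real numbers with α > 0 and |1+β|(|1-α| + αρ) + |β| < 1. Then the spectral radius of the entrywise absolute value |T_{α,β}| of the 2n×2n block matrix T_{α,β} = [[(1+β)(I - αA), -βI], [I, 0]] is strictly less than 1. -/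
open Matrix

/-!
Entrywise, `|T_{α,β}|` is dominated by the nonnegative matrix
`D = [[|1+β| (|1-α| I + α T), |β| I], [I, 0]]`, and for nonnegative matrices the spectral radius is
monotone in the entries: by Gelfand's formula it suffices to compare the `∞`-operator norms of
the powers. If `z` is an eigenvalue of `D` with `|z| ≥ 1`, a Schur complement shows that
`z - |β| / z` is an eigenvalue of the top left block, whose eigenvalues have modulus at most
`|1+β| (|1-α| + α ρ)`. Hence `|z| ≤ |1+β| (|1-α| + α ρ) + |β| < 1`, a contradiction.
-/

lemma spectralRadius_le_of_forall_nnnorm_pow_le {A : Type*} [NormedRing A] [NormedAlgebra ℂ A]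
    [CompleteSpace A] {a b : A} (h : ∀ k : ℕ, ‖a ^ k‖₊ ≤ ‖b ^ k‖₊) :
    spectralRadius ℂ a ≤ spectralRadius ℂ b :=
  le_of_tendsto_of_tendsto' (spectrum.pow_nnnorm_pow_one_div_tendsto_nhds_spectralRadius a)
    (spectrum.pow_nnnorm_pow_one_div_tendsto_nhds_spectralRadius b) fun k =>
    ENNReal.rpow_le_rpow (by exact_mod_cast h k) (by positivity)

namespace Matrix

section Complex

variable {m : Type*} [Fintype m] [DecidableEq m]

lemma norm_le_specRad {M : Matrix m m ℂ} {z : ℂ} (hz : z ∈ spectrum ℂ M) :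
    ‖z‖ ≤ specRad M :=
  le_csSup ((M.finite_spectrum.image _).bddAbove) ⟨z, hz, rfl⟩

lemma specRad_nonneg (M : Matrix m m ℂ) : 0 ≤ specRad M :=
  Real.sSup_nonneg (by rintro x ⟨z, _, rfl⟩; exact norm_nonneg z)

lemma specRad_le_of_forall_norm_le {M : Matrix m m ℂ} {r : ℝ} (hr : 0 ≤ r)
    (h : ∀ z ∈ spectrum ℂ M, ‖z‖ ≤ r) : specRad M ≤ r :=
  Real.sSup_le (by rintro x ⟨z, hz, rfl⟩; exact h z hz) hr

lemma specRad_lt_of_forall_norm_lt {M : Matrix m m ℂ} {r : ℝ} (hr : 0 < r)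
    (h : ∀ z ∈ spectrum ℂ M, ‖z‖ < r) : specRad M < r := by
  rcases ((fun z : ℂ => ‖z‖) '' spectrum ℂ M).eq_empty_or_nonempty with hM | hM
  · rwa [specRad, hM, Real.sSup_empty]
  · rw [specRad, (M.finite_spectrum.image _).csSup_lt_iff hM]
    rintro x ⟨z, hz, rfl⟩
    exact h z hz

lemma spectralRadius_le_ofReal_specRad (M : Matrix m m ℂ) :
    spectralRadius ℂ M ≤ ENNReal.ofReal (specRad M) :=
  iSup₂_le fun z hz => (ofReal_norm z).ge.trans (ENNReal.ofReal_le_ofReal (norm_le_specRad hz))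

lemma specRad_le_of_spectralRadius_le {B C : Matrix m m ℂ}
    (h : spectralRadius ℂ B ≤ spectralRadius ℂ C) : specRad B ≤ specRad C := by
  refine specRad_le_of_forall_norm_le (specRad_nonneg C) fun z hz => ?_
  rw [← ENNReal.ofReal_le_ofReal_iff (specRad_nonneg C), ofReal_norm]
  have hzB : ‖z‖ₑ ≤ spectralRadius ℂ B :=
    le_iSup₂ (f := fun k (_ : k ∈ spectrum ℂ B) => ‖k‖ₑ) z hz
  exact hzB.trans (h.trans (spectralRadius_le_ofReal_specRad C))

lemma specRad_smul_le (d : ℂ) (M : Matrix m m ℂ) : specRad (d • M) ≤ ‖d‖ * specRad M := by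
  refine specRad_le_of_forall_norm_le (by positivity [specRad_nonneg M]) fun z hz => ?_
  rcases eq_or_ne d 0 with rfl | hd
  · have : z = 0 := by
      by_contra hz0
      rw [zero_smul, spectrum.mem_iff, sub_zero] at hz
      exact hz ((Ne.isUnit hz0).map _)
    simp [this]
  · rw [show d • M = Units.mk0 d hd • M from rfl, spectrum.unit_smul_eq_smul] at hz
    obtain ⟨w, hw, rfl⟩ := hz
    simp only [Units.val_mk0, smul_eq_mul, norm_mul]
    exact mul_le_mul_of_nonneg_left (norm_le_specRad hw) (norm_nonneg d)

lemma specRad_algebraMap_add_le (c : ℂ) (M : Matrix m m ℂ) :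
    specRad (algebraMap ℂ _ c + M) ≤ ‖c‖ + specRad M := by
  refine specRad_le_of_forall_norm_le (by positivity [specRad_nonneg M]) fun z hz => ?_
  rw [← sub_add_cancel z c, spectrum.add_mem_add_iff] at hz
  calc ‖z‖ = ‖c + (z - c)‖ := by rw [add_sub_cancel]
    _ ≤ ‖c‖ + specRad M := (norm_add_le _ _).trans (by gcongr; exact norm_le_specRad hz)

lemma specRad_smul_one_add_smul_le (c d : ℂ) (M : Matrix m m ℂ) :
    specRad (c • 1 + d • M) ≤ ‖c‖ + ‖d‖ * specRad M := by
  rw [← Algebra.algebraMap_eq_smul_one]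
  exact (specRad_algebraMap_add_le c _).trans (by gcongr; exact specRad_smul_le d M)

lemma sub_mul_inv_mem_spectrum_of_mem_spectrum_fromBlocks (S : Matrix m m ℂ) (b : ℂ) {z : ℂ}
    (hz0 : z ≠ 0) (hz : z ∈ spectrum ℂ (fromBlocks S (b • 1) 1 (0 : Matrix m m ℂ))) :
    z - b * z⁻¹ ∈ spectrum ℂ S := by
  rw [spectrum.mem_iff, isUnit_iff_isUnit_det, isUnit_iff_ne_zero, not_not,
    Algebra.algebraMap_eq_smul_one] at hz ⊢
  let : Invertible (z • 1 : Matrix m m ℂ) :=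
    ⟨z⁻¹ • 1, by simp [smul_smul, hz0], by simp [smul_smul, hz0]⟩
  have hblocks : z • (1 : Matrix (m ⊕ m) (m ⊕ m) ℂ) - fromBlocks S (b • 1) 1 0
      = fromBlocks (z • 1 - S) (-(b • 1)) (-1) (z • 1) := by
    rw [← fromBlocks_one, fromBlocks_smul, sub_eq_add_neg, fromBlocks_neg, fromBlocks_add,
      ← sub_eq_add_neg]
    simp
  have hschur : z • 1 - S - -(b • 1) * ⅟(z • 1 : Matrix m m ℂ) * -1 = (z - b * z⁻¹) • 1 - S := by
    rw [invOf_eq_right_inv (show (z • 1 : Matrix m m ℂ) * (z⁻¹ • 1) = 1 by simp [smul_smul, hz0])]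
    simp only [neg_mul, mul_neg, neg_neg, mul_one, smul_mul_smul_comm, sub_smul]
    abel
  rw [hblocks, det_fromBlocks₂₂, hschur, det_smul, det_one, mul_one] at hz
  exact (mul_eq_zero.mp hz).resolve_left (pow_ne_zero _ hz0)

lemma specRad_fromBlocks_lt_one {S : Matrix m m ℂ} {b : ℂ} (h : specRad S + ‖b‖ < 1) :
    specRad (fromBlocks S (b • 1) 1 (0 : Matrix m m ℂ)) < 1 := by
  refine specRad_lt_of_forall_norm_lt one_pos fun z hz => ?_
  by_contra! hz1
  have hz0 : z ≠ 0 := by rintro rfl; norm_num at hz1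
  have hS := norm_le_specRad (sub_mul_inv_mem_spectrum_of_mem_spectrum_fromBlocks S b hz0 hz)
  have hb : ‖b * z⁻¹‖ ≤ ‖b‖ := by
    rw [norm_mul, norm_inv]
    exact mul_le_of_le_one_right (norm_nonneg b) (inv_le_one_of_one_le₀ hz1)
  have := norm_le_norm_sub_add z (b * z⁻¹)
  linarith

end Complex

section Entrywise

variable {m : Type*} [DecidableEq m]

lemma abs_smul_one_add_smul_apply_le {T : Matrix m m ℝ} (hT : ∀ i j, 0 ≤ T i j) (a b : ℝ)
    (i j : m) : |(a • 1 + b • T) i j| ≤ (|a| • 1 + |b| • T) i j := by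
  simp only [add_apply, smul_apply, smul_eq_mul]
  refine (abs_add_le _ _).trans_eq ?_
  rw [abs_mul, abs_mul, abs_of_nonneg (hT i j), abs_of_nonneg (zero_le_one_elem i j)]

lemma abs_fromBlocks_apply_le {T : Matrix m m ℝ} (hT : ∀ i j, 0 ≤ T i j) (a b e : ℝ) :
    ∀ i j, |fromBlocks (a • 1 + b • T) (e • 1) 1 (0 : Matrix m m ℝ) i j|
      ≤ fromBlocks (|a| • 1 + |b| • T) (|e| • 1) 1 (0 : Matrix m m ℝ) i j := by
  rintro (i | i) (j | j)
  · exact abs_smul_one_add_smul_apply_le hT a b i j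
  all_goals by_cases hij : i = j <;> simp [hij]

end Entrywise

section Real

variable {m : Type*} [Fintype m] [DecidableEq m]

lemma pow_apply_le_pow_apply {B C : Matrix m m ℝ} (hB : ∀ i j, 0 ≤ B i j)
    (hBC : ∀ i j, B i j ≤ C i j) (k : ℕ) : ∀ i j, (B ^ k) i j ≤ (C ^ k) i j := by
  induction k with
  | zero => exact fun _ _ => le_rfl
  | succ k ih =>
    intro i j
    rw [pow_succ, pow_succ, mul_apply, mul_apply]
    exact Finset.sum_le_sum fun l _ => mul_le_mul (ih i l) (hBC l j) (hB l j)
      ((pow_apply_nonneg hB k i l).trans (ih i l))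

attribute [local instance] Matrix.linftyOpNormedRing Matrix.linftyOpNormedAlgebra

lemma linfty_opNNNorm_le_of_apply_le {B C : Matrix m m ℝ} (hB : ∀ i j, 0 ≤ B i j)
    (hBC : ∀ i j, B i j ≤ C i j) : ‖B‖₊ ≤ ‖C‖₊ := by
  rw [linfty_opNNNorm_def, linfty_opNNNorm_def]
  refine Finset.sup_mono_fun fun i _ => Finset.sum_le_sum fun j _ => ?_
  rw [← NNReal.coe_le_coe, coe_nnnorm, coe_nnnorm, Real.norm_of_nonneg (hB i j),
    Real.norm_of_nonneg ((hB i j).trans (hBC i j))]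
  exact hBC i j

lemma linfty_opNNNorm_map_ofReal (B : Matrix m m ℝ) : ‖B.map Complex.ofReal‖₊ = ‖B‖₊ := by
  simp only [linfty_opNNNorm_def, map_apply, Complex.nnnorm_real]

lemma specRadR_mono {B C : Matrix m m ℝ} (hB : ∀ i j, 0 ≤ B i j)
    (hBC : ∀ i j, B i j ≤ C i j) : specRadR B ≤ specRadR C := by
  refine specRad_le_of_spectralRadius_le (spectralRadius_le_of_forall_nnnorm_pow_le fun k => ?_)
  have hpow (M : Matrix m m ℝ) : M.map Complex.ofReal ^ k = (M ^ k).map Complex.ofReal :=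
    (map_pow Complex.ofRealHom.mapMatrix M k).symm
  rw [hpow, hpow, linfty_opNNNorm_map_ofReal, linfty_opNNNorm_map_ofReal]
  exact linfty_opNNNorm_le_of_apply_le (pow_apply_nonneg hB k) (pow_apply_le_pow_apply hB hBC k)

lemma specRadR_smul_one_add_smul_le (c d : ℝ) (M : Matrix m m ℝ) :
    specRadR (c • 1 + d • M) ≤ |c| + |d| * specRadR M := by
  have hmap :
      (c • 1 + d • M).map Complex.ofReal = (c : ℂ) • 1 + (d : ℂ) • M.map Complex.ofReal := by
    ext i j; by_cases hij : i = j <;> simp [hij]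
  unfold specRadR
  rw [hmap]
  simpa only [Complex.norm_real, Real.norm_eq_abs] using
    specRad_smul_one_add_smul_le (c : ℂ) d (M.map Complex.ofReal)

lemma specRadR_fromBlocks_lt_one {S : Matrix m m ℝ} {b : ℝ} (h : specRadR S + |b| < 1) :
    specRadR (fromBlocks S (b • 1) 1 (0 : Matrix m m ℝ)) < 1 := by
  have hmap : (fromBlocks S (b • 1) 1 (0 : Matrix m m ℝ)).map Complex.ofReal
      = fromBlocks (S.map Complex.ofReal) ((b : ℂ) • 1) 1 0 := by
    ext (i | i) (j | j) <;> by_cases hij : i = j <;> simp [hij]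
  rw [specRadR, hmap]
  exact specRad_fromBlocks_lt_one (by rwa [Complex.norm_real])

end Real

end Matrix

theorem asynchronous_second_order_richardson_convergence_general
    {n : ℕ} (T : Matrix (Fin n) (Fin n) ℝ)
    (hT : ∀ i j, 0 ≤ T i j)
    (ρ : ℝ) (hρ : ρ = specRadR T)
    (α β : ℝ) (hα : 0 < α)
    (hcond : |1 + β| * (|1 - α| + α * ρ) + |β| < 1) :
    specRadR (Matrix.of fun i j =>
      |(Matrix.fromBlocks
          ((1 + β) • ((1 : Matrix (Fin n) (Fin n) ℝ)
            - α • ((1 : Matrix (Fin n) (Fin n) ℝ) - T)))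
          (-β • (1 : Matrix (Fin n) (Fin n) ℝ))
          (1 : Matrix (Fin n) (Fin n) ℝ)
          (0 : Matrix (Fin n) (Fin n) ℝ)) i j|) < 1 := by
  have hblock : (1 + β) • ((1 : Matrix (Fin n) (Fin n) ℝ) - α • (1 - T))
      = ((1 + β) * (1 - α)) • 1 + ((1 + β) * α) • T := by
    module
  rw [hblock]
  calc _ ≤ specRadR (fromBlocks (|(1 + β) * (1 - α)| • 1 + |(1 + β) * α| • T) (|-β| • 1) 1 0) :=
        specRadR_mono (fun _ _ => abs_nonneg _) (abs_fromBlocks_apply_le hT _ _ _)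
    _ < 1 := by
      refine specRadR_fromBlocks_lt_one ?_
      have hD := specRadR_smul_one_add_smul_le |(1 + β) * (1 - α)| |(1 + β) * α| T
      simp only [abs_abs, abs_neg, abs_mul, abs_of_pos hα, ← hρ] at hD ⊢
      linarith

theorem asynchronous_second_order_richardson_convergence
    {n : ℕ} (T : Matrix (Fin n) (Fin n) ℝ)
    (hT : ∀ i j, 0 ≤ T i j)
    (ρ : ℝ) (hρ : ρ = specRadR T) (hρ1 : ρ < 1)
    (hspec : ∀ μ ∈ spectrum ℂ
        (((1 : Matrix (Fin n) (Fin n) ℝ) - T).map Complex.ofReal),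
      ∃ r : ℝ, 0 < r ∧ μ = (r : ℂ))
    (α β : ℝ) (hα : 0 < α)
    (hcond : |1 + β| * (|1 - α| + α * ρ) + |β| < 1) :
    specRadR (Matrix.of fun i j =>
      |(Matrix.fromBlocks
          ((1 + β) • ((1 : Matrix (Fin n) (Fin n) ℝ)
            - α • ((1 : Matrix (Fin n) (Fin n) ℝ) - T)))
          (-β • (1 : Matrix (Fin n) (Fin n) ℝ))
          (1 : Matrix (Fin n) (Fin n) ℝ)
          (0 : Matrix (Fin n) (Fin n) ℝ)) i j|) < 1 :=
  asynchronous_second_order_richardson_convergence_general T hT ρ hρ α β hα hcond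
end

section
/- Let T be a real n×n matrix with nonnegative entries, set A = I - T, let ν ≥ 0 and let w ∈ ℝⁿ have strictly positive entries with Tw ≤ νw entrywise. Let α > 0, β ∈ ℝ, and γ > 0. Then the entrywise absolute value |T_{α,β}| of the 2n×2n block matrix T_{α,β} = [[(1+β)(I - αA), -βI], [I, 0]] satisfies |T_{α,β}|·(w, γw) ≤ σ·(w, γw) entrywise, where σ = max{1/γ, |1+β|(|1-α| + αν) + |β|γ}, and consequently ρ(|T_{α,β}|) ≤ σ. -/
/-!
A nonnegative matrix with a positive subinvariant vector, `M v ≤ σ v`, has spectral radius at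
most `σ`: at an index maximising `|x_j| / v_j` for an eigenvector `x`, the eigen-equation and the
triangle inequality give `|z| |x_i| ≤ σ |x_i|`. For `|T_{α,β}|` the vector `(w, γw)` is
subinvariant: the lower block row maps it to `w = (1/γ) γw`, and in the upper block row
`|I - αA| ≤ |1 - α| I + αT` entrywise, so it maps it to at most `|1 + β| (|1 - α| + αν) w + |β| γ w`.
-/

open Matrix

namespace Matrix

variable {l m : Type*} [Fintype m]

theorem mulVec_le_mulVec_of_le {M N : Matrix l m ℝ} (hMN : ∀ i j, M i j ≤ N i j) {v : m → ℝ}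
    (hv : ∀ j, 0 ≤ v j) (i : l) : (M *ᵥ v) i ≤ (N *ᵥ v) i :=
  Finset.sum_le_sum fun j _ => mul_le_mul_of_nonneg_right (hMN i j) (hv j)

theorem mulVec_le_mulVec_of_nonneg {M : Matrix l m ℝ} (hM : ∀ i j, 0 ≤ M i j) {u v : m → ℝ}
    (huv : ∀ j, u j ≤ v j) (i : l) : (M *ᵥ u) i ≤ (M *ᵥ v) i :=
  Finset.sum_le_sum fun j _ => mul_le_mul_of_nonneg_left (huv j) (hM i j)

theorem norm_map_ofReal_mulVec_le {M : Matrix l m ℝ} (hM : ∀ i j, 0 ≤ M i j) (x : m → ℂ)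
    (i : l) : ‖(M.map Complex.ofReal *ᵥ x) i‖ ≤ (M *ᵥ fun j => ‖x j‖) i :=
  calc ‖∑ j, (M i j : ℂ) * x j‖
      ≤ ∑ j, ‖(M i j : ℂ) * x j‖ := norm_sum_le _ _
    _ = ∑ j, M i j * ‖x j‖ := by
      simp only [norm_mul, Complex.norm_real, Real.norm_of_nonneg (hM i _)]

theorem exists_mulVec_eq_smul_of_mem_spectrum {K : Type*} [Field K] [DecidableEq m]
    {A : Matrix m m K} {z : K} (hz : z ∈ spectrum K A) : ∃ x ≠ 0, A *ᵥ x = z • x := by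
  rw [← Matrix.spectrum_toLin', ← Module.End.hasEigenvalue_iff_mem_spectrum] at hz
  obtain ⟨x, hx⟩ := hz.exists_hasEigenvector
  exact ⟨x, hx.2, by simpa using hx.apply_eq_smul⟩

theorem norm_le_of_mulVec_le_of_mulVec_eq_smul {M : Matrix m m ℝ} (hM : ∀ i j, 0 ≤ M i j)
    {σ : ℝ} {v : m → ℝ} (hv : ∀ i, 0 < v i) (hMv : ∀ i, (M *ᵥ v) i ≤ σ * v i)
    {z : ℂ} {x : m → ℂ} (hx0 : x ≠ 0) (hx : M.map Complex.ofReal *ᵥ x = z • x) : ‖z‖ ≤ σ := by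
  obtain ⟨k, hk⟩ := Function.ne_iff.mp hx0
  obtain ⟨i, -, hi⟩ := Finset.exists_max_image Finset.univ (fun j => ‖x j‖ / v j)
    ⟨k, Finset.mem_univ k⟩
  set c := ‖x i‖ / v i
  have hc : 0 < c := (div_pos (norm_pos_iff.mpr hk) (hv k)).trans_le (hi k (Finset.mem_univ k))
  have hxc : ∀ j, ‖x j‖ ≤ (c • v) j := fun j => by
    rw [Pi.smul_apply, smul_eq_mul, ← div_le_iff₀ (hv j)]
    exact hi j (Finset.mem_univ j)
  have hxi : ‖x i‖ = c * v i := (div_mul_cancel₀ _ (hv i).ne').symm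
  refine le_of_mul_le_mul_right ?_ (mul_pos hc (hv i))
  calc ‖z‖ * (c * v i) = ‖(M.map Complex.ofReal *ᵥ x) i‖ := by
        rw [hx, Pi.smul_apply, smul_eq_mul, norm_mul, hxi]
    _ ≤ (M *ᵥ fun j => ‖x j‖) i := norm_map_ofReal_mulVec_le hM x i
    _ ≤ (M *ᵥ (c • v)) i := mulVec_le_mulVec_of_nonneg hM hxc i
    _ = c * (M *ᵥ v) i := by rw [mulVec_smul, Pi.smul_apply, smul_eq_mul]
    _ ≤ c * (σ * v i) := mul_le_mul_of_nonneg_left (hMv i) hc.le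
    _ = σ * (c * v i) := by ring

theorem specRadR_le_of_mulVec_le [DecidableEq m] {M : Matrix m m ℝ} (hM : ∀ i j, 0 ≤ M i j)
    {σ : ℝ} (hσ : 0 ≤ σ) {v : m → ℝ} (hv : ∀ i, 0 < v i)
    (hMv : ∀ i, (M *ᵥ v) i ≤ σ * v i) : specRadR M ≤ σ := by
  refine Real.sSup_le ?_ hσ
  rintro _ ⟨z, hz, rfl⟩
  obtain ⟨x, hx0, hx⟩ := exists_mulVec_eq_smul_of_mem_spectrum hz
  exact norm_le_of_mulVec_le_of_mulVec_eq_smul hM hv hMv hx0 hx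

end Matrix

section Richardson

variable {n : Type*} [DecidableEq n]

/-- The second order Richardson iteration matrix `T_{α,β}` for `A = I - T`. -/
def secondOrderRichardsonMatrix (T : Matrix n n ℝ) (α β : ℝ) : Matrix (n ⊕ n) (n ⊕ n) ℝ :=
  fromBlocks ((1 + β) • (1 - α • (1 - T))) (-β • 1) 1 0

theorem abs_one_sub_smul_one_sub_apply_le {T : Matrix n n ℝ} (hT : ∀ i j, 0 ≤ T i j)
    {α : ℝ} (hα : 0 ≤ α) (i j : n) :
    |(1 - α • (1 - T)) i j| ≤ (|1 - α| • 1 + α • T) i j := by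
  have hentry : (1 - α • (1 - T)) i j = (1 - α) * (1 : Matrix n n ℝ) i j + α * T i j := by
    simp only [Matrix.sub_apply, Matrix.smul_apply, smul_eq_mul]
    ring
  have hone : 0 ≤ (1 : Matrix n n ℝ) i j := by rw [one_apply]; split_ifs <;> norm_num
  calc |(1 - α • (1 - T)) i j|
      ≤ |(1 - α) * (1 : Matrix n n ℝ) i j| + |α * T i j| := hentry ▸ abs_add_le _ _
    _ = (|1 - α| • 1 + α • T) i j := by
      rw [Matrix.add_apply, Matrix.smul_apply, Matrix.smul_apply, smul_eq_mul, smul_eq_mul, abs_mul, abs_of_nonneg hone, abs_of_nonneg (mul_nonneg hα (hT i j))]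

theorem abs_one_sub_smul_one_sub_mulVec_le [Fintype n] {T : Matrix n n ℝ} (hT : ∀ i j, 0 ≤ T i j)
    {α ν : ℝ} (hα : 0 ≤ α) {w : n → ℝ} (hw : ∀ i, 0 ≤ w i) (hsub : ∀ i, (T *ᵥ w) i ≤ ν * w i)
    (i : n) : ((1 - α • (1 - T)).map (|·|) *ᵥ w) i ≤ (|1 - α| + α * ν) * w i :=
  calc ((1 - α • (1 - T)).map (|·|) *ᵥ w) i
      ≤ ((|1 - α| • 1 + α • T) *ᵥ w) i :=
        mulVec_le_mulVec_of_le (fun i j => abs_one_sub_smul_one_sub_apply_le hT hα i j) hw i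
    _ = |1 - α| * w i + α * (T *ᵥ w) i := by
        simp only [add_mulVec, smul_mulVec, one_mulVec, Pi.add_apply, Pi.smul_apply, smul_eq_mul]
    _ ≤ (|1 - α| + α * ν) * w i := by nlinarith [mul_le_mul_of_nonneg_left (hsub i) hα]

theorem map_abs_secondOrderRichardsonMatrix (T : Matrix n n ℝ) (α β : ℝ) :
    (secondOrderRichardsonMatrix T α β).map (|·|) =
      fromBlocks (|1 + β| • (1 - α • (1 - T)).map (|·|)) (|β| • 1) 1 0 := by
  rw [secondOrderRichardsonMatrix, fromBlocks_map]
  congr 1 <;> ext i j <;> by_cases h : i = j <;> simp [h, abs_mul, one_apply]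

theorem map_abs_secondOrderRichardsonMatrix_mulVec_le [Fintype n] {T : Matrix n n ℝ}
    (hT : ∀ i j, 0 ≤ T i j) {ν : ℝ} {w : n → ℝ} (hw : ∀ i, 0 ≤ w i)
    (hsub : ∀ i, (T *ᵥ w) i ≤ ν * w i) {α β γ : ℝ} (hα : 0 ≤ α) (hγ : 0 < γ) (i : n ⊕ n) :
    ((secondOrderRichardsonMatrix T α β).map (|·|) *ᵥ Sum.elim w (fun j => γ * w j)) i
      ≤ max (1 / γ) (|1 + β| * (|1 - α| + α * ν) + |β| * γ)
          * Sum.elim w (fun j => γ * w j) i := by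
  rw [map_abs_secondOrderRichardsonMatrix, fromBlocks_mulVec]
  rcases i with i | i
  · simp only [Sum.elim_inl, Pi.add_apply, Function.comp_def, smul_mulVec, one_mulVec,
      Pi.smul_apply, smul_eq_mul]
    have hupper := abs_one_sub_smul_one_sub_mulVec_le hT hα hw hsub i
    calc (|1 + β| * ((1 - α • (1 - T)).map (|·|) *ᵥ w) i) + |β| * (γ * w i)
        ≤ (|1 + β| * (|1 - α| + α * ν) + |β| * γ) * w i := by
          nlinarith [mul_le_mul_of_nonneg_left hupper (abs_nonneg (1 + β))]
      _ ≤ _ := mul_le_mul_of_nonneg_right (le_max_right _ _) (hw i)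
  · simp only [Sum.elim_inr, Pi.add_apply, Function.comp_def, one_mulVec, zero_mulVec]
    calc w i + 0 = 1 / γ * (γ * w i) := by rw [add_zero]; field_simp
      _ ≤ _ := mul_le_mul_of_nonneg_right (le_max_left _ _) (mul_nonneg hγ.le (hw i))

end Richardson

theorem second_order_richardson_abs_block_subinvariance_general
    {n : ℕ} (T : Matrix (Fin n) (Fin n) ℝ)
    (hT : ∀ i j, 0 ≤ T i j)
    (ν : ℝ)
    (w : Fin n → ℝ) (hw : ∀ i, 0 < w i)
    (hsub : ∀ i, T.mulVec w i ≤ ν * w i)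
    (α β γ : ℝ) (hα : 0 < α) (hγ : 0 < γ) :
    (∀ i, (Matrix.of fun i j =>
        |(Matrix.fromBlocks
            ((1 + β) • ((1 : Matrix (Fin n) (Fin n) ℝ)
              - α • ((1 : Matrix (Fin n) (Fin n) ℝ) - T)))
            (-β • (1 : Matrix (Fin n) (Fin n) ℝ))
            (1 : Matrix (Fin n) (Fin n) ℝ)
            (0 : Matrix (Fin n) (Fin n) ℝ)) i j|).mulVec
          (Sum.elim w (fun j => γ * w j)) i
        ≤ max (1 / γ) (|1 + β| * (|1 - α| + α * ν) + |β| * γ)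
            * Sum.elim w (fun j => γ * w j) i) ∧
    specRadR (Matrix.of fun i j =>
        |(Matrix.fromBlocks
            ((1 + β) • ((1 : Matrix (Fin n) (Fin n) ℝ)
              - α • ((1 : Matrix (Fin n) (Fin n) ℝ) - T)))
            (-β • (1 : Matrix (Fin n) (Fin n) ℝ))
            (1 : Matrix (Fin n) (Fin n) ℝ)
            (0 : Matrix (Fin n) (Fin n) ℝ)) i j|)
      ≤ max (1 / γ) (|1 + β| * (|1 - α| + α * ν) + |β| * γ) := by
  have hbound := map_abs_secondOrderRichardsonMatrix_mulVec_le hT (fun i => (hw i).le) hsub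
    (β := β) hα.le hγ
  refine ⟨hbound, specRadR_le_of_mulVec_le (fun i j => abs_nonneg _)
    ((one_div_pos.mpr hγ).le.trans (le_max_left _ _)) ?_ hbound⟩
  rintro (i | i)
  · exact hw i
  · exact mul_pos hγ (hw i)

theorem second_order_richardson_abs_block_subinvariance
    {n : ℕ} (T : Matrix (Fin n) (Fin n) ℝ)
    (hT : ∀ i j, 0 ≤ T i j)
    (ν : ℝ) (hν : 0 ≤ ν)
    (w : Fin n → ℝ) (hw : ∀ i, 0 < w i)
    (hsub : ∀ i, T.mulVec w i ≤ ν * w i)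
    (α β γ : ℝ) (hα : 0 < α) (hγ : 0 < γ) :
    (∀ i, (Matrix.of fun i j =>
        |(Matrix.fromBlocks
            ((1 + β) • ((1 : Matrix (Fin n) (Fin n) ℝ)
              - α • ((1 : Matrix (Fin n) (Fin n) ℝ) - T)))
            (-β • (1 : Matrix (Fin n) (Fin n) ℝ))
            (1 : Matrix (Fin n) (Fin n) ℝ)
            (0 : Matrix (Fin n) (Fin n) ℝ)) i j|).mulVec
          (Sum.elim w (fun j => γ * w j)) i
        ≤ max (1 / γ) (|1 + β| * (|1 - α| + α * ν) + |β| * γ)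
            * Sum.elim w (fun j => γ * w j) i) ∧
    specRadR (Matrix.of fun i j =>
        |(Matrix.fromBlocks
            ((1 + β) • ((1 : Matrix (Fin n) (Fin n) ℝ)
              - α • ((1 : Matrix (Fin n) (Fin n) ℝ) - T)))
            (-β • (1 : Matrix (Fin n) (Fin n) ℝ))
            (1 : Matrix (Fin n) (Fin n) ℝ)
            (0 : Matrix (Fin n) (Fin n) ℝ)) i j|)
      ≤ max (1 / γ) (|1 + β| * (|1 - α| + α * ν) + |β| * γ) :=
  second_order_richardson_abs_block_subinvariance_general T hT ν w hw hsub α β γ hα hγ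
end

section
/- Let ν ≥ 0 and β be real numbers. Then the inequality |1+β|ν + |β| < 1 holds if and only if ν < 1 and -1 < β < (1-ν)/(1+ν). In particular, if ν ≥ 1 or β ≤ -1, then |1+β|ν + |β| ≥ 1. -/
/-! For `β ≤ -1` already `|β| ≥ 1`. For `β > -1` we have `|1 + β| = 1 + β`, so the criterion reads
`|β| < 1 - (1 + β) ν`, i.e. the two linear inequalities `(1 + β) ν < 1 + β` and `(1 + ν) β < 1 - ν`,
which say `ν < 1` and `β < (1 - ν) / (1 + ν)`. -/

theorem one_le_abs_one_add_mul_add_abs_of_le_neg_one {ν β : ℝ} (hν : 0 ≤ ν) (hβ : β ≤ -1) :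
    1 ≤ |1 + β| * ν + |β| :=
  calc 1 ≤ |β| := by rw [abs_of_neg (by linarith)]; linarith
    _ ≤ |1 + β| * ν + |β| := le_add_of_nonneg_left (mul_nonneg (abs_nonneg _) hν)

theorem abs_one_add_mul_add_abs_lt_one_iff {ν β : ℝ} (hν : 0 ≤ ν) (hβ : -1 < β) :
    |1 + β| * ν + |β| < 1 ↔ ν < 1 ∧ β < (1 - ν) / (1 + ν) := by
  have hβ₁ : 0 < 1 + β := by linarith
  rw [abs_of_pos hβ₁, ← lt_sub_iff_add_lt', abs_lt, lt_div_iff₀ (by linarith)]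
  refine and_congr ?_ ?_
  · calc -(1 - (1 + β) * ν) < β ↔ (1 + β) * ν < (1 + β) * 1 := by
          constructor <;> intro <;> linarith
      _ ↔ ν < 1 := mul_lt_mul_iff_of_pos_left hβ₁
  · constructor <;> intro <;> linarith

theorem second_order_richardson_parameter_criterion
    (ν β : ℝ) (hν : 0 ≤ ν) :
    (|1 + β| * ν + |β| < 1 ↔ (ν < 1 ∧ -1 < β ∧ β < (1 - ν) / (1 + ν))) ∧
    ((1 ≤ ν ∨ β ≤ -1) → 1 ≤ |1 + β| * ν + |β|) := by
  have criterion : |1 + β| * ν + |β| < 1 ↔ (ν < 1 ∧ -1 < β ∧ β < (1 - ν) / (1 + ν)) := by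
    rcases le_or_gt β (-1) with hβ | hβ
    · simp only [(one_le_abs_one_add_mul_add_abs_of_le_neg_one hν hβ).not_gt, false_iff]
      rintro ⟨-, hβ', -⟩
      linarith
    · rw [abs_one_add_mul_add_abs_lt_one_iff hν hβ]
      tauto
  refine ⟨criterion, fun h => not_lt.1 fun hlt => ?_⟩
  obtain ⟨hν₁, hβ₁, -⟩ := criterion.1 hlt
  rcases h with h | h <;> linarith
end
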